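/- arXiv:1806.08936 — 8 statements merged into one kernel-verified Lean document; each statement's English description precedes it below -/
import Mathlib

section
/- For every integer k ≥ 1 there exist a connected simple graph G = (V,E) with |V| = k² + k + 1 vertices and |E| = 2k² edges, a family U of K = k^k scenarios with edge costs c^ξ_e ∈ {0,1}, and a fractional solution x : E → [0,1] such that: Σ_{e∈E} x_e = |V| − 1; Σ_{e∈δ(S)} x_e ≥ 1 for every nonempty proper subset S ⊂ V; Σ_{e∈E} c^ξ_e x_e = 1 for every scenario ξ ∈ U; and every spanning tree T of G satisfies max_{ξ∈U} Σ_{e∈T} c^ξ_e ≥ k. Consequently, the cut-set LP relaxation of the min-max spanning tree problem has integrality gap at least k = Ω(log K / log log K). -/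
/-!
The graph has a root `r`, hubs `h i` and leaves `ℓ i j` (`i j < k`), with the edges `h i — ℓ i j`
of weight `1` and `ℓ i j — r` of weight `1/k`. The scenario `ξ : Fin k → Fin k` charges exactly
the edges `ℓ i (ξ i) — r`, so its fractional cost is `k · 1/k = 1`. A cut either separates a hub
from one of its leaves, and pays `1` on that edge, or leaves a whole block `{h i, ℓ i _}` on the
other side of the root, and pays `k · 1/k` on its root edges. A spanning tree has to leave every
block `i` through some root edge `ℓ i (f i) — r`, so the scenario `f` costs it at least `k`.
-/

open SimpleGraph Finset Function

theorem SimpleGraph.Preconnected.exists_adj_mem_notMem {V : Type*} {G : SimpleGraph V}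
    (hG : G.Preconnected) {B : Set V} {u v : V} (hu : u ∈ B) (hv : v ∉ B) :
    ∃ a b, G.Adj a b ∧ a ∈ B ∧ b ∉ B := by
  obtain ⟨p⟩ := hG u v
  obtain ⟨d, -, hd, hd'⟩ := p.exists_boundary_dart B hu hv
  exact ⟨d.fst, d.snd, d.adj, hd, hd'⟩

theorem Sym2.exists_eq_mk_mem_notMem_of_not_iff {V : Type*} {S : Finset V} {a b : V}
    (h : ¬(a ∈ S ↔ b ∈ S)) : ∃ a' b', s(a, b) = s(a', b') ∧ a' ∈ S ∧ b' ∉ S := by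
  by_cases ha : a ∈ S
  · exact ⟨a, b, rfl, ha, by tauto⟩
  · exact ⟨b, a, Sym2.eq_swap, by tauto, ha⟩

theorem Finset.exists_mem_iff_not_of_nonempty_of_ne_univ {V : Type*} [Fintype V]
    {S : Finset V} (hS : S.Nonempty) (hSu : S ≠ univ) (w : V) : ∃ v, ¬(v ∈ S ↔ w ∈ S) := by
  by_cases hw : w ∈ S
  · obtain ⟨v, hv⟩ : ∃ v, v ∉ S := by
      by_contra! h
      exact hSu (eq_univ_of_forall h)
    exact ⟨v, by tauto⟩
  · obtain ⟨v, hv⟩ := hS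
    exact ⟨v, by tauto⟩

theorem Finset.sum_comp_le_sum_of_injective {ι β M : Type*} [Fintype ι] [AddCommMonoid M]
    [PartialOrder M] [IsOrderedAddMonoid M] {f : β → M} {φ : ι → β} {T : Finset β}
    (hφ : Injective φ) (hφT : ∀ i, φ i ∈ T) (hf : ∀ e ∈ T, 0 ≤ f e) :
    ∑ i, f (φ i) ≤ ∑ e ∈ T, f e := by
  calc ∑ i, f (φ i) = ∑ e ∈ univ.map ⟨φ, hφ⟩, f e := (sum_map univ ⟨φ, hφ⟩ f).symm
    _ ≤ ∑ e ∈ T, f e :=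
      sum_le_sum_of_subset_of_nonneg (by simp [subset_iff, hφT]) fun e he _ => hf e he

namespace MinMaxTreeGap

noncomputable section

abbrev Vertex (k : ℕ) := Fin (k ^ 2 + k + 1)

/-- The root is `none`, the hub `i` is `(i, none)` and the leaf `(i, j)` is `(i, some j)`. -/
def encode (k : ℕ) : Option (Fin k × Option (Fin k)) ≃ Vertex k :=
  Fintype.equivFinOfCardEq (by simp; ring)

variable {k : ℕ}

def root (k : ℕ) : Vertex k := encode k none

def hub (i : Fin k) : Vertex k := encode k (some (i, none))

def leaf (i j : Fin k) : Vertex k := encode k (some (i, some j))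

def blockOf (v : Vertex k) : Option (Fin k) := ((encode k).symm v).map Prod.fst

lemma vertex_cases (v : Vertex k) : v = root k ∨ (∃ i, v = hub i) ∨ ∃ i j, v = leaf i j := by
  obtain ⟨_ | ⟨i, _ | j⟩, rfl⟩ := (encode k).surjective v
  exacts [Or.inl rfl, Or.inr (Or.inl ⟨i, rfl⟩), Or.inr (Or.inr ⟨i, j, rfl⟩)]

@[simp] lemma hub_ne_root (i : Fin k) : hub i ≠ root k := by simp [hub, root]
@[simp] lemma leaf_ne_root (i j : Fin k) : leaf i j ≠ root k := by simp [leaf, root]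
@[simp] lemma hub_ne_leaf (i i' j : Fin k) : hub i ≠ leaf i' j := by simp [hub, leaf]

@[simp] lemma leaf_inj {i j i' j' : Fin k} : leaf i j = leaf i' j' ↔ i = i' ∧ j = j' := by
  simp [leaf]

@[simp] lemma blockOf_root : blockOf (root k) = none := by simp [blockOf, root]
@[simp] lemma blockOf_hub (i : Fin k) : blockOf (hub i) = some i := by simp [blockOf, hub]
@[simp] lemma blockOf_leaf (i j : Fin k) : blockOf (leaf i j) = some i := by simp [blockOf, leaf]

def hubEdge (i j : Fin k) : Sym2 (Vertex k) := s(hub i, leaf i j)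

def rootEdge (i j : Fin k) : Sym2 (Vertex k) := s(leaf i j, root k)

lemma root_notMem_hubEdge (i j : Fin k) : root k ∉ hubEdge i j := by
  simp [hubEdge, eq_comm]

lemma root_mem_rootEdge (i j : Fin k) : root k ∈ rootEdge i j := Sym2.mem_mk_right _ _

lemma hubEdge_inj {i j i' j' : Fin k} : hubEdge i j = hubEdge i' j' ↔ i = i' ∧ j = j' := by
  refine ⟨fun h => ?_, by rintro ⟨rfl, rfl⟩; rfl⟩
  rcases Sym2.eq_iff.1 h with ⟨-, h⟩ | ⟨h, -⟩
  exacts [leaf_inj.1 h, absurd h (hub_ne_leaf _ _ _)]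

lemma rootEdge_inj {i j i' j' : Fin k} : rootEdge i j = rootEdge i' j' ↔ i = i' ∧ j = j' := by
  rw [rootEdge, rootEdge, Sym2.congr_left, leaf_inj]

def hubEdgeEmb (k : ℕ) : Fin k × Fin k ↪ Sym2 (Vertex k) :=
  ⟨fun p => hubEdge p.1 p.2, fun _ _ h => Prod.ext_iff.2 (hubEdge_inj.1 h)⟩

def rootEdgeEmb (k : ℕ) : Fin k × Fin k ↪ Sym2 (Vertex k) :=
  ⟨fun p => rootEdge p.1 p.2, fun _ _ h => Prod.ext_iff.2 (rootEdge_inj.1 h)⟩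

@[simp] lemma hubEdgeEmb_apply (p : Fin k × Fin k) : hubEdgeEmb k p = hubEdge p.1 p.2 := rfl

@[simp] lemma rootEdgeEmb_apply (p : Fin k × Fin k) : rootEdgeEmb k p = rootEdge p.1 p.2 := rfl

def edges (k : ℕ) : Finset (Sym2 (Vertex k)) :=
  (univ.map (hubEdgeEmb k)).disjUnion (univ.map (rootEdgeEmb k)) <| by
    simp only [Finset.disjoint_left, mem_map, mem_univ, true_and, not_exists, hubEdgeEmb_apply,
      rootEdgeEmb_apply]
    rintro _ ⟨p, rfl⟩ q h
    exact root_notMem_hubEdge p.1 p.2 (h ▸ root_mem_rootEdge q.1 q.2)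

lemma mem_edges {e : Sym2 (Vertex k)} :
    e ∈ edges k ↔ (∃ i j, hubEdge i j = e) ∨ ∃ i j, rootEdge i j = e := by
  simp [edges]

lemma card_edges : #(edges k) = 2 * k ^ 2 := by
  rw [edges, card_disjUnion, card_map, card_map, card_univ, Fintype.card_prod, Fintype.card_fin]
  ring

lemma sum_edges {M : Type*} [AddCommMonoid M] (f : Sym2 (Vertex k) → M) :
    ∑ e ∈ edges k, f e = ∑ i, ∑ j, f (hubEdge i j) + ∑ i, ∑ j, f (rootEdge i j) := by
  rw [edges, sum_disjUnion, sum_map, sum_map, Fintype.sum_prod_type, Fintype.sum_prod_type]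
  rfl

lemma not_isDiag_of_mem_edges {e : Sym2 (Vertex k)} (he : e ∈ edges k) : ¬e.IsDiag := by
  rcases mem_edges.1 he with ⟨i, j, rfl⟩ | ⟨i, j, rfl⟩ <;> simp [hubEdge, rootEdge]

def graph (k : ℕ) : SimpleGraph (Vertex k) := fromEdgeSet (edges k)

lemma edgeSet_graph : (graph k).edgeSet = edges k := by
  rw [graph, edgeSet_fromEdgeSet, sdiff_eq_left, Set.disjoint_left]
  exact fun e he => not_isDiag_of_mem_edges he

open scoped Classical in
lemma edgeFinset_graph : (graph k).edgeFinset = edges k :=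
  coe_injective (by rw [coe_edgeFinset, edgeSet_graph])

lemma graph_adj_hub_leaf (i j : Fin k) : (graph k).Adj (hub i) (leaf i j) :=
  (fromEdgeSet_adj _).2 ⟨mem_edges.2 (Or.inl ⟨i, j, rfl⟩), hub_ne_leaf i i j⟩

lemma graph_adj_leaf_root (i j : Fin k) : (graph k).Adj (leaf i j) (root k) :=
  (fromEdgeSet_adj _).2 ⟨mem_edges.2 (Or.inr ⟨i, j, rfl⟩), leaf_ne_root i j⟩

lemma connected_graph : (graph k).Connected := by
  refine (connected_iff_exists_forall_reachable _).2 ⟨root k, fun v => ?_⟩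
  obtain rfl | ⟨i, rfl⟩ | ⟨i, j, rfl⟩ := vertex_cases v
  · rfl
  · exact ((graph_adj_hub_leaf i i).reachable.trans (graph_adj_leaf_root i i).reachable).symm
  · exact (graph_adj_leaf_root i j).reachable.symm

def weight (k : ℕ) (e : Sym2 (Vertex k)) : ℝ := if root k ∈ e then (k : ℝ)⁻¹ else 1

lemma weight_nonneg (e : Sym2 (Vertex k)) : 0 ≤ weight k e := by
  unfold weight; split_ifs <;> positivity

lemma weight_le_one (e : Sym2 (Vertex k)) : weight k e ≤ 1 := by
  unfold weight; split_ifs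
  exacts [Nat.cast_inv_le_one k, le_rfl]

@[simp] lemma weight_hubEdge (i j : Fin k) : weight k (hubEdge i j) = 1 :=
  if_neg (root_notMem_hubEdge i j)

@[simp] lemma weight_rootEdge (i j : Fin k) : weight k (rootEdge i j) = (k : ℝ)⁻¹ :=
  if_pos (root_mem_rootEdge i j)

lemma sum_weight : ∑ e ∈ edges k, weight k e = k ^ 2 + k := by
  rw [sum_edges]
  simp [sq, ← mul_assoc, mul_self_mul_inv]

def scenarioEquiv (k : ℕ) : (Fin k → Fin k) ≃ Fin (k ^ k) :=
  Fintype.equivFinOfCardEq (by simp)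

def cost (ξ : Fin k → Fin k) (e : Sym2 (Vertex k)) : ℝ :=
  if ∃ i, e = rootEdge i (ξ i) then 1 else 0

lemma cost_eq_zero_or_one (ξ : Fin k → Fin k) (e : Sym2 (Vertex k)) :
    cost ξ e = 0 ∨ cost ξ e = 1 := by
  unfold cost; split_ifs <;> simp

lemma cost_nonneg (ξ : Fin k → Fin k) (e : Sym2 (Vertex k)) : 0 ≤ cost ξ e := by
  rcases cost_eq_zero_or_one ξ e with h | h <;> simp [h]

@[simp] lemma cost_hubEdge (ξ : Fin k → Fin k) (i j : Fin k) : cost ξ (hubEdge i j) = 0 :=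
  if_neg fun ⟨i', h⟩ => root_notMem_hubEdge i j (h ▸ root_mem_rootEdge i' (ξ i'))

@[simp] lemma cost_rootEdge (ξ : Fin k → Fin k) (i j : Fin k) :
    cost ξ (rootEdge i j) = if ξ i = j then 1 else 0 := by
  simp [cost, rootEdge_inj, eq_comm]

lemma sum_cost_mul_weight (hk : 0 < k) (ξ : Fin k → Fin k) :
    ∑ e ∈ edges k, cost ξ e * weight k e = 1 := by
  have : (k : ℝ) ≠ 0 := by positivity
  simp [sum_edges, this]

open scoped Classical in
lemma one_le_sum_weight_crossing (S : Finset (Vertex k)) (hS : S.Nonempty) (hSu : S ≠ univ) :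
    1 ≤ ∑ e ∈ (edges k).filter (fun e => ∃ a b, e = s(a, b) ∧ a ∈ S ∧ b ∉ S), weight k e := by
  have mem_crossing {a b : Vertex k} (he : s(a, b) ∈ edges k) (hab : ¬(a ∈ S ↔ b ∈ S)) :
      s(a, b) ∈ (edges k).filter (fun e => ∃ a b, e = s(a, b) ∧ a ∈ S ∧ b ∉ S) :=
    mem_filter.2 ⟨he, Sym2.exists_eq_mk_mem_notMem_of_not_iff hab⟩
  by_cases hblocks : ∀ i j, (hub i ∈ S ↔ leaf i j ∈ S)
  · -- some block lies entirely on the other side of the root, so its `k` root edges all cross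
    obtain ⟨i, hi⟩ : ∃ i, ¬(hub i ∈ S ↔ root k ∈ S) := by
      obtain ⟨v, hv⟩ := exists_mem_iff_not_of_nonempty_of_ne_univ hS hSu (root k)
      obtain rfl | ⟨i, rfl⟩ | ⟨i, j, rfl⟩ := vertex_cases v
      exacts [absurd Iff.rfl hv, ⟨i, hv⟩, ⟨i, by rwa [hblocks i j]⟩]
    have hk : (k : ℝ) ≠ 0 := Nat.cast_ne_zero.2 (Fin.pos i).ne'
    calc 1 = ∑ j, weight k (rootEdge i j) := by simp [hk]
      _ ≤ _ := sum_comp_le_sum_of_injective (fun j j' h => (rootEdge_inj.1 h).2)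
          (fun j => mem_crossing (mem_edges.2 (Or.inr ⟨i, j, rfl⟩)) (by rwa [← hblocks i j]))
          (fun e _ => weight_nonneg e)
  · simp only [not_forall] at hblocks
    obtain ⟨i, j, hij⟩ := hblocks
    calc 1 = weight k (hubEdge i j) := (weight_hubEdge i j).symm
      _ ≤ _ := single_le_sum (fun e _ => weight_nonneg e)
          (mem_crossing (mem_edges.2 (Or.inl ⟨i, j, rfl⟩)) hij)

lemma exists_eq_rootEdge_of_crossing_block {a b : Vertex k} {i : Fin k} (he : s(a, b) ∈ edges k)
    (ha : blockOf a = some i) (hb : blockOf b ≠ some i) : ∃ j, s(a, b) = rootEdge i j := by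
  rcases mem_edges.1 he with ⟨i', j, h⟩ | ⟨i', j, h⟩ <;>
    rcases Sym2.eq_iff.1 h with ⟨rfl, rfl⟩ | ⟨rfl, rfl⟩ <;> simp_all
  exact ⟨j, rfl⟩

lemma exists_rootEdge_mem_of_connected {T : Finset (Sym2 (Vertex k))}
    (hT : ↑T ⊆ (graph k).edgeSet) (hconn : (fromEdgeSet (T : Set (Sym2 (Vertex k)))).Connected)
    (i : Fin k) : ∃ j, rootEdge i j ∈ T := by
  obtain ⟨a, b, hab, ha, hb⟩ := hconn.preconnected.exists_adj_mem_notMem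
    (B := {v | blockOf v = some i}) (u := hub i) (v := root k) (by simp) (by simp)
  have habT : s(a, b) ∈ T := ((fromEdgeSet_adj _).1 hab).1
  have habE : s(a, b) ∈ edges k := by simpa [edgeSet_graph] using hT habT
  obtain ⟨j, hj⟩ := exists_eq_rootEdge_of_crossing_block habE ha hb
  exact ⟨j, hj ▸ habT⟩

lemma exists_le_sum_cost_of_connected {T : Finset (Sym2 (Vertex k))}
    (hT : ↑T ⊆ (graph k).edgeSet) (hconn : (fromEdgeSet (T : Set (Sym2 (Vertex k)))).Connected) :
    ∃ ξ, (k : ℝ) ≤ ∑ e ∈ T, cost ξ e := by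
  choose ξ hξ using exists_rootEdge_mem_of_connected hT hconn
  refine ⟨ξ, ?_⟩
  calc (k : ℝ) = ∑ i, cost ξ (rootEdge i (ξ i)) := by simp
    _ ≤ _ := sum_comp_le_sum_of_injective (fun i i' h => (rootEdge_inj.1 h).1) hξ
        (fun e _ => cost_nonneg ξ e)

end

end MinMaxTreeGap

open scoped Classical in
/-- Integrality gap `Ω(log K / log log K)` of the cut-set LP relaxation of the
min-max spanning tree problem: for every `k ≥ 1` there is a connected simple
graph on `k²+k+1` vertices with `2k²` edges, `K = k^k` scenarios of `0/1` edge
costs, and a fractional solution `x` of total weight `|V|-1`, covering every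
cut, of scenario cost exactly `1`, while every spanning tree has max scenario
cost `≥ k`. -/
theorem stmt1 (k : ℕ) (hk : 1 ≤ k) :
    ∃ (G : SimpleGraph (Fin (k ^ 2 + k + 1)))
      (c : Fin (k ^ k) → Sym2 (Fin (k ^ 2 + k + 1)) → ℝ)
      (x : Sym2 (Fin (k ^ 2 + k + 1)) → ℝ),
      G.Connected ∧
      G.edgeFinset.card = 2 * k ^ 2 ∧
      (∀ ξ, ∀ e ∈ G.edgeFinset, c ξ e = 0 ∨ c ξ e = 1) ∧
      (∀ e, 0 ≤ x e ∧ x e ≤ 1) ∧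
      (∑ e ∈ G.edgeFinset, x e) = (k ^ 2 + k : ℝ) ∧
      (∀ S : Finset (Fin (k ^ 2 + k + 1)), S.Nonempty → S ≠ Finset.univ →
        1 ≤ ∑ e ∈ G.edgeFinset.filter
          (fun e => ∃ a b, e = s(a, b) ∧ a ∈ S ∧ b ∉ S), x e) ∧
      (∀ ξ, ∑ e ∈ G.edgeFinset, c ξ e * x e = 1) ∧
      (∀ T : Finset (Sym2 (Fin (k ^ 2 + k + 1))),
        ↑T ⊆ G.edgeSet →
        (fromEdgeSet (↑T : Set (Sym2 (Fin (k ^ 2 + k + 1))))).Connected →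
        (fromEdgeSet (↑T : Set (Sym2 (Fin (k ^ 2 + k + 1))))).IsAcyclic →
        ∃ ξ, (k : ℝ) ≤ ∑ e ∈ T, c ξ e) := by
  open MinMaxTreeGap in
  exact ⟨graph k, fun n => cost ((scenarioEquiv k).symm n), weight k, connected_graph,
    edgeFinset_graph ▸ card_edges, fun _ _ _ => cost_eq_zero_or_one _ _,
    fun e => ⟨weight_nonneg e, weight_le_one e⟩, edgeFinset_graph ▸ sum_weight,
    fun S hS hSu => edgeFinset_graph ▸ one_le_sum_weight_crossing S hS hSu,
    fun _ => edgeFinset_graph ▸ sum_cost_mul_weight hk _, fun _ hT hconn _ =>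
      let ⟨ξ, hξ⟩ := exists_le_sum_cost_of_connected hT hconn
      ⟨scenarioEquiv k ξ, by simpa using hξ⟩⟩
end

section
/- There exists a universal constant C > 0 such that the following holds. Let G = (V,E) be a connected simple graph on n ≥ 2 vertices, U a finite set of scenarios with |U| = K ≥ 2, L > 0, where each scenario ξ assigns a cost c^ξ_e ∈ [0, L] to every edge e ∈ E. Suppose x : E → [0,1] satisfies Σ_{e∈δ(S)} x_e ≥ 1 for every nonempty proper subset S ⊂ V, and Σ_{e∈E} c^ξ_e x_e ≤ L for every ξ ∈ U. Then there exists a spanning tree T of G with Σ_{e∈T} c^ξ_e ≤ C · (ln n + ln K) · L for every ξ ∈ U. -/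
/-!
Greedy rounding with a pessimistic estimator. Grow an edge set `T ⊆ E` and track the potential
`Φ(T) = ∑_ξ exp (c_ξ(T) / L)`. If `T` has `r ≥ 2` components, the cut constraints of the `r`
components give the edges crossing between components total `x`-weight at least `r / 2`, while the
scenario constraints give `∑_e (∑_ξ exp (c_ξ(T) / L) c_ξ(e)) x_e ≤ Φ L`. Hence some crossing edge
has weighted cost at most `2 Φ L / r`, and since `exp t ≤ 1 + 2 t` on `[0, 1]`, adding it multiplies
`Φ` by at most `1 + 4 / r` while lowering the number of components. As `(1 + 4/r) (r - 1)^4 ≤ r^4`,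
the quantity `Φ · r^4` never increases, so starting from `T = ∅` we reach a connected `T` with
`Φ(T) ≤ K n^4`, i.e. `c_ξ(T) ≤ L (ln K + 4 ln n)` for every `ξ`; a spanning tree inside `T` costs
no more.
-/

open SimpleGraph Finset

theorem Real.exp_le_one_add_two_mul {t : ℝ} (h0 : 0 ≤ t) (h1 : t ≤ 1) :
    Real.exp t ≤ 1 + 2 * t := by
  have h := Real.abs_exp_sub_one_sub_id_le (x := t) (by rw [abs_of_nonneg h0]; exact h1)
  nlinarith [le_abs_self (Real.exp t - 1 - t)]

theorem one_add_four_div_mul_pow_four_le {r s : ℕ} (h : s < r) :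
    (1 + 4 / r) * (s : ℝ) ^ 4 ≤ (r : ℝ) ^ 4 := by
  have hr : (0 : ℝ) < r := by exact_mod_cast (Nat.zero_le s).trans_lt h
  have hs : (s : ℝ) ≤ r * Real.exp (-(1 / r)) := by
    have : (s : ℝ) + 1 ≤ r := by exact_mod_cast h
    have := Real.add_one_le_exp (-(1 / r))
    calc (s : ℝ) ≤ r * (-(1 / r) + 1) := by field_simp; linarith
      _ ≤ _ := by gcongr
  calc (1 + 4 / r) * (s : ℝ) ^ 4
      ≤ Real.exp (4 / r) * (r * Real.exp (-(1 / r))) ^ 4 := by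
        gcongr
        linarith [Real.add_one_le_exp (4 / r)]
    _ = (r : ℝ) ^ 4 := by
        rw [mul_pow, ← Real.exp_nat_mul, mul_left_comm, ← Real.exp_add]
        ring_nf
        simp

theorem Finset.exists_mul_le_of_le_sum {ι : Type*} {s : Finset ι} {w x : ι → ℝ} {m B : ℝ}
    (hx : ∀ i ∈ s, 0 ≤ x i) (hm : 0 < m) (hB : 0 ≤ B) (hsum : m ≤ ∑ i ∈ s, x i)
    (hwx : ∑ i ∈ s, w i * x i ≤ B) : ∃ i ∈ s, w i * m ≤ B := by
  by_contra! h
  obtain ⟨j, hj, hxj⟩ : ∃ j ∈ s, (0 : ℝ) < x j :=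
    exists_lt_of_sum_lt (by simpa using hm.trans_le hsum)
  have hlt : ∑ i ∈ s, B * x i < ∑ i ∈ s, w i * m * x i :=
    sum_lt_sum (fun i hi => mul_le_mul_of_nonneg_right (h i hi).le (hx i hi))
      ⟨j, hj, mul_lt_mul_of_pos_right (h j hj) hxj⟩
  rw [← mul_sum] at hlt
  have : ∑ i ∈ s, w i * m * x i = m * ∑ i ∈ s, w i * x i := by
    rw [mul_sum]; exact sum_congr rfl fun i _ => by ring
  linarith [mul_le_mul_of_nonneg_left hsum hB, mul_le_mul_of_nonneg_left hwx hm.le]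

section Cut

variable {V : Type*} [Fintype V] [DecidableEq V]

theorem sum_sum_cut_eq_two_mul_sum_crossing {β : Type*} [Fintype β] [DecidableEq β]
    (E : Finset (Sym2 V)) (x : Sym2 V → ℝ) (f : V → β) :
    ∑ i, ∑ e ∈ E.filter (fun e => ∃ a b, e = s(a, b) ∧
        a ∈ univ.filter (f · = i) ∧ b ∉ univ.filter (f · = i)), x e =
      2 * ∑ e ∈ E.filter (fun e => ∃ a b, e = s(a, b) ∧ f a ≠ f b), x e := by
  simp_rw [sum_filter, mul_sum]
  rw [sum_comm]
  refine sum_congr rfl fun e _ => ?_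
  induction e using Sym2.ind with
  | _ u v =>
  have hmem : ∀ i, (∃ a b, s(u, v) = s(a, b) ∧
      a ∈ univ.filter (f · = i) ∧ b ∉ univ.filter (f · = i)) ↔
      f u ≠ f v ∧ (i = f u ∨ i = f v) := by
    intro i
    simp only [Sym2.eq_iff, mem_filter, mem_univ, true_and]
    grind
  have hcross : (∃ a b, s(u, v) = s(a, b) ∧ f a ≠ f b) ↔ f u ≠ f v := by
    simp only [Sym2.eq_iff]
    grind
  simp only [hmem, hcross, ← sum_filter]
  by_cases huv : f u = f v
  · simp [huv]
  · simp only [huv, ne_eq, not_false_eq_true, true_and]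
    rw [if_pos trivial, sum_const, nsmul_eq_mul]
    have : univ.filter (fun i => i = f u ∨ i = f v) = {f u, f v} := by ext; simp
    rw [this, card_pair huv]
    norm_num

theorem card_le_two_mul_sum_crossing {β : Type*} [Finite β] [DecidableEq β] [Nontrivial β]
    (E : Finset (Sym2 V)) (x : Sym2 V → ℝ) {f : V → β} (hf : Function.Surjective f)
    (hcut : ∀ S : Finset V, S.Nonempty → S ≠ univ →
      1 ≤ ∑ e ∈ E.filter (fun e => ∃ a b, e = s(a, b) ∧ a ∈ S ∧ b ∉ S), x e) :
    (Nat.card β : ℝ) ≤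
      2 * ∑ e ∈ E.filter (fun e => ∃ a b, e = s(a, b) ∧ f a ≠ f b), x e := by
  have := Fintype.ofFinite β
  rw [← sum_sum_cut_eq_two_mul_sum_crossing, Nat.card_eq_fintype_card, Fintype.card_eq_sum_ones,
    Nat.cast_sum, Nat.cast_one]
  refine sum_le_sum fun i _ => ?_
  obtain ⟨j, hji⟩ := exists_ne i
  obtain ⟨v, rfl⟩ := hf i
  obtain ⟨w, rfl⟩ := hf j
  refine hcut (univ.filter (f · = f v)) ⟨v, by simp⟩ fun h => hji ?_
  exact (mem_filter.mp (h.ge (mem_univ w))).2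

end Cut

section Components

variable {V : Type*}

theorem SimpleGraph.ConnectedComponent.card_lt_card_of_le_of_adj [Finite V]
    {H H' : SimpleGraph V} (h : H ≤ H') {a b : V}
    (hab : H'.Adj a b) (hne : H.connectedComponentMk a ≠ H.connectedComponentMk b) :
    Nat.card H'.ConnectedComponent < Nat.card H.ConnectedComponent := by
  classical
  have := Fintype.ofFinite V
  rw [Nat.card_eq_fintype_card, Nat.card_eq_fintype_card]
  refine Fintype.card_lt_of_surjective_not_injective _ (ConnectedComponent.surjective_map_ofLE h)
    fun hinj => hne (hinj ?_)
  exact ConnectedComponent.sound hab.reachable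

theorem SimpleGraph.nontrivial_connectedComponent_of_not_connected [Nonempty V]
    {H : SimpleGraph V} (h : ¬H.Connected) : Nontrivial H.ConnectedComponent := by
  refine not_subsingleton_iff_nontrivial.mp fun hs => h ⟨fun u v => ?_⟩
  exact ConnectedComponent.eq.mp (Subsingleton.elim _ _)

theorem SimpleGraph.exists_isTree_fromEdgeSet_subset [Fintype V] {T : Finset (Sym2 V)}
    (h : (fromEdgeSet (T : Set (Sym2 V))).Connected) :
    ∃ T' ⊆ T, (fromEdgeSet (T' : Set (Sym2 V))).IsTree := by
  classical
  obtain ⟨F, hle, hF⟩ := h.exists_isTree_le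
  refine ⟨F.edgeFinset, fun e he => ?_, by rwa [coe_edgeFinset, fromEdgeSet_edgeSet]⟩
  have := edgeSet_mono hle (mem_edgeFinset.mp he)
  rw [edgeSet_fromEdgeSet] at this
  exact this.1

end Components

section Potential

variable {V ι : Type*} [Fintype ι] (c : ι → Sym2 V → ℝ) (L : ℝ)

noncomputable def potential (T : Finset (Sym2 V)) : ℝ :=
  ∑ ξ, Real.exp ((∑ e ∈ T, c ξ e) / L)

noncomputable def weightedCost (T : Finset (Sym2 V)) (e : Sym2 V) : ℝ :=
  ∑ ξ, Real.exp ((∑ e' ∈ T, c ξ e') / L) * c ξ e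

theorem potential_nonneg (T : Finset (Sym2 V)) : 0 ≤ potential c L T :=
  sum_nonneg fun _ _ => (Real.exp_pos _).le

theorem potential_empty : potential c L ∅ = Fintype.card ι := by
  simp [potential]

variable {c L}

theorem sum_le_mul_log_of_potential_le (hL : 0 < L) {T : Finset (Sym2 V)} {M : ℝ}
    (hM : potential c L T ≤ M) (ξ : ι) :
    ∑ e ∈ T, c ξ e ≤ L * Real.log M := by
  have hexp : Real.exp ((∑ e ∈ T, c ξ e) / L) ≤ M :=
    (single_le_sum (f := fun ξ => Real.exp ((∑ e ∈ T, c ξ e) / L))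
      (fun _ _ => (Real.exp_pos _).le) (mem_univ ξ)).trans hM
  rw [← div_le_iff₀' hL, Real.le_log_iff_exp_le ((Real.exp_pos _).trans_le hexp)]
  exact hexp

theorem weightedCost_nonneg (T : Finset (Sym2 V)) {e : Sym2 V} (hc : ∀ ξ, 0 ≤ c ξ e) :
    0 ≤ weightedCost c L T e :=
  sum_nonneg fun ξ _ => mul_nonneg (Real.exp_pos _).le (hc ξ)

theorem potential_insert_le [DecidableEq V] (hL : 0 < L) {T : Finset (Sym2 V)} {e : Sym2 V}
    (he : e ∉ T) (hc : ∀ ξ, 0 ≤ c ξ e ∧ c ξ e ≤ L) :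
    potential c L (insert e T) ≤ potential c L T + 2 / L * weightedCost c L T e := by
  rw [potential, potential, weightedCost, mul_sum, ← sum_add_distrib]
  refine sum_le_sum fun ξ _ => ?_
  have hstep : Real.exp (c ξ e / L) ≤ 1 + 2 * (c ξ e / L) :=
    Real.exp_le_one_add_two_mul (div_nonneg (hc ξ).1 hL.le) ((div_le_one hL).mpr (hc ξ).2)
  calc Real.exp ((∑ e' ∈ insert e T, c ξ e') / L)
      = Real.exp ((∑ e' ∈ T, c ξ e') / L) * Real.exp (c ξ e / L) := by
        rw [sum_insert he, add_div, Real.exp_add, mul_comm]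
    _ ≤ Real.exp ((∑ e' ∈ T, c ξ e') / L) * (1 + 2 * (c ξ e / L)) := by gcongr
    _ = _ := by ring

theorem sum_weightedCost_mul_le (T E : Finset (Sym2 V)) (x : Sym2 V → ℝ)
    (hLP : ∀ ξ, ∑ e ∈ E, c ξ e * x e ≤ L) :
    ∑ e ∈ E, weightedCost c L T e * x e ≤ potential c L T * L := by
  calc ∑ e ∈ E, weightedCost c L T e * x e
      = ∑ ξ, Real.exp ((∑ e' ∈ T, c ξ e') / L) * ∑ e ∈ E, c ξ e * x e := by
        simp only [weightedCost, sum_mul, mul_sum, mul_assoc]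
        exact sum_comm
    _ ≤ ∑ ξ, Real.exp ((∑ e' ∈ T, c ξ e') / L) * L :=
        sum_le_sum fun ξ _ => mul_le_mul_of_nonneg_left (hLP ξ) (Real.exp_pos _).le
    _ = potential c L T * L := by rw [potential, sum_mul]

end Potential

section Greedy
open scoped Classical

variable {V ι : Type*} [Fintype V] [DecidableEq V] [Nonempty V] [Fintype ι]
  {G : SimpleGraph V} {c : ι → Sym2 V → ℝ} {x : Sym2 V → ℝ} {L : ℝ}

theorem exists_adj_potential_insert_le (hL : 0 < L)
    (hcL : ∀ ξ, ∀ e ∈ G.edgeSet, 0 ≤ c ξ e ∧ c ξ e ≤ L) (hx : ∀ e, 0 ≤ x e)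
    (hcut : ∀ S : Finset V, S.Nonempty → S ≠ univ →
      1 ≤ ∑ e ∈ G.edgeFinset.filter
        (fun e => ∃ a b, e = s(a, b) ∧ a ∈ S ∧ b ∉ S), x e)
    (hLP : ∀ ξ, ∑ e ∈ G.edgeFinset, c ξ e * x e ≤ L)
    {T : Finset (Sym2 V)} (hT : ¬(fromEdgeSet (T : Set (Sym2 V))).Connected) :
    ∃ a b, G.Adj a b ∧
      (fromEdgeSet (T : Set (Sym2 V))).connectedComponentMk a ≠
        (fromEdgeSet (T : Set (Sym2 V))).connectedComponentMk b ∧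
      potential c L (insert s(a, b) T) ≤
        (1 + 4 / Nat.card (fromEdgeSet (T : Set (Sym2 V))).ConnectedComponent) *
          potential c L T := by
  set H := fromEdgeSet (T : Set (Sym2 V))
  set F := G.edgeFinset.filter
    (fun e => ∃ a b, e = s(a, b) ∧ H.connectedComponentMk a ≠ H.connectedComponentMk b)
  have := nontrivial_connectedComponent_of_not_connected hT
  have hr : (Nat.card H.ConnectedComponent : ℝ) ≤ 2 * ∑ e ∈ F, x e :=
    card_le_two_mul_sum_crossing _ x (fun κ => κ.exists_rep) hcut
  have hr0 : (0 : ℝ) < Nat.card H.ConnectedComponent := by exact_mod_cast Nat.card_pos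
  have hwx : ∑ e ∈ F, weightedCost c L T e * x e ≤ potential c L T * L :=
    (sum_le_sum_of_subset_of_nonneg (filter_subset _ _) fun e he _ =>
      mul_nonneg (weightedCost_nonneg T fun ξ => (hcL ξ e (mem_edgeFinset.mp he)).1) (hx e)).trans
      (sum_weightedCost_mul_le T _ x hLP)
  obtain ⟨e, he, hcheap⟩ := exists_mul_le_of_le_sum (fun e _ => hx e) (half_pos hr0)
    (mul_nonneg (potential_nonneg c L T) hL.le) (by linarith) hwx
  obtain ⟨heG, a, b, rfl, hab⟩ := mem_filter.mp he
  have hGab : G.Adj a b := mem_edgeFinset.mp heG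
  have heT : s(a, b) ∉ T := fun h => hab (ConnectedComponent.sound
    (Adj.reachable ((fromEdgeSet_adj _).mpr ⟨h, hGab.ne⟩)))
  refine ⟨a, b, hGab, hab, (potential_insert_le hL heT (hcL · _ hGab)).trans ?_⟩
  rw [add_mul, one_mul, add_le_add_iff_left, div_mul_eq_mul_div, div_mul_eq_mul_div,
    div_le_div_iff₀ hL hr0]
  linarith

theorem exists_connected_potential_le (hL : 0 < L)
    (hcL : ∀ ξ, ∀ e ∈ G.edgeSet, 0 ≤ c ξ e ∧ c ξ e ≤ L) (hx : ∀ e, 0 ≤ x e)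
    (hcut : ∀ S : Finset V, S.Nonempty → S ≠ univ →
      1 ≤ ∑ e ∈ G.edgeFinset.filter
        (fun e => ∃ a b, e = s(a, b) ∧ a ∈ S ∧ b ∉ S), x e)
    (hLP : ∀ ξ, ∑ e ∈ G.edgeFinset, c ξ e * x e ≤ L)
    (T : Finset (Sym2 V)) (hT : (T : Set (Sym2 V)) ⊆ G.edgeSet) :
    ∃ T' : Finset (Sym2 V), (T' : Set (Sym2 V)) ⊆ G.edgeSet ∧
      (fromEdgeSet (T' : Set (Sym2 V))).Connected ∧
      potential c L T' ≤
        potential c L T * Nat.card (fromEdgeSet (T : Set (Sym2 V))).ConnectedComponent ^ 4 := by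
  induction hr : Nat.card (fromEdgeSet (T : Set (Sym2 V))).ConnectedComponent
    using Nat.strong_induction_on generalizing T with
  | _ r ih =>
  by_cases hconn : (fromEdgeSet (T : Set (Sym2 V))).Connected
  · have : r = 1 := hr ▸ Nat.card_eq_one_iff_unique.mpr
      ⟨hconn.preconnected.subsingleton_connectedComponent, inferInstance⟩
    exact ⟨T, hT, hconn, by simp [this]⟩
  obtain ⟨a, b, hab, hne, hΦ⟩ := exists_adj_potential_insert_le hL hcL hx hcut hLP hconn
  have hT₁ : ((insert s(a, b) T : Finset (Sym2 V)) : Set (Sym2 V)) ⊆ G.edgeSet := by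
    rw [coe_insert]
    exact Set.insert_subset hab hT
  have hlt := ConnectedComponent.card_lt_card_of_le_of_adj
    (fromEdgeSet_mono (coe_subset.mpr (subset_insert s(a, b) T)))
    ((fromEdgeSet_adj _).mpr ⟨mem_insert_self _ _, hab.ne⟩) hne
  rw [hr] at hlt hΦ
  obtain ⟨T', hT'G, hT'conn, hT'Φ⟩ := ih _ hlt _ hT₁ rfl
  refine ⟨T', hT'G, hT'conn, hT'Φ.trans ?_⟩
  calc _ ≤ (1 + 4 / r) * potential c L T *
        Nat.card (fromEdgeSet (↑(insert s(a, b) T) : Set (Sym2 V))).ConnectedComponent ^ 4 := by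
        gcongr
    _ = potential c L T * ((1 + 4 / r) *
        Nat.card (fromEdgeSet (↑(insert s(a, b) T) : Set (Sym2 V))).ConnectedComponent ^ 4) := by
        ring
    _ ≤ potential c L T * r ^ 4 :=
        mul_le_mul_of_nonneg_left (one_add_four_div_mul_pow_four_le hlt) (potential_nonneg c L T)

end Greedy

open scoped Classical in
/-- Existence form of the randomized `O(log n)`-approximation for min-max
spanning tree: if `x : E → [0,1]` crosses every cut with weight `≥ 1` and has
scenario cost `≤ L` for every scenario (all edge costs lying in `[0,L]`), then
some spanning tree `T` (a subset of the edges whose graph is connected and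
acyclic) has `Σ_{e∈T} c ξ e ≤ C·(ln n + ln K)·L` for every scenario `ξ`. -/
theorem stmt5 :
    ∃ C : ℝ, 0 < C ∧
      ∀ (V : Type) [Fintype V] [DecidableEq V] (G : SimpleGraph V) (K : ℕ)
        (c : Fin K → Sym2 V → ℝ) (x : Sym2 V → ℝ) (L : ℝ),
        2 ≤ Fintype.card V → G.Connected → 2 ≤ K → 0 < L →
        (∀ ξ, ∀ e ∈ G.edgeSet, 0 ≤ c ξ e ∧ c ξ e ≤ L) →
        (∀ e, 0 ≤ x e ∧ x e ≤ 1) →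
        (∀ S : Finset V, S.Nonempty → S ≠ Finset.univ →
          1 ≤ ∑ e ∈ G.edgeFinset.filter
            (fun e => ∃ a b, e = s(a, b) ∧ a ∈ S ∧ b ∉ S), x e) →
        (∀ ξ, ∑ e ∈ G.edgeFinset, c ξ e * x e ≤ L) →
        ∃ T : Finset (Sym2 V), ↑T ⊆ G.edgeSet ∧
          (fromEdgeSet (↑T : Set (Sym2 V))).Connected ∧
          (fromEdgeSet (↑T : Set (Sym2 V))).IsAcyclic ∧
          ∀ ξ, ∑ e ∈ T, c ξ e ≤
            C * (Real.log (Fintype.card V) + Real.log K) * L := by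
  refine ⟨4, by norm_num, ?_⟩
  intro V _ _ G K c x L hn _ hK hL hcL hx hcut hLP
  have : Nonempty V := Fintype.card_pos_iff.mp (by omega)
  obtain ⟨T, hTG, hTconn, hTΦ⟩ :=
    exists_connected_potential_le hL hcL (fun e => (hx e).1) hcut hLP ∅ (by simp)
  have hΦ : potential c L T ≤ K * (Fintype.card V : ℝ) ^ 4 := by
    refine hTΦ.trans ?_
    rw [potential_empty, Fintype.card_fin, ← Nat.card_eq_fintype_card]
    gcongr
    exact Nat.card_le_card_of_surjective _ fun κ => κ.exists_rep
  obtain ⟨T', hT'T, hT'⟩ := exists_isTree_fromEdgeSet_subset hTconn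
  refine ⟨T', (coe_subset.mpr hT'T).trans hTG, hT'.1, hT'.2, fun ξ => ?_⟩
  have hlogK : 0 ≤ Real.log K := Real.log_nonneg (by exact_mod_cast (by omega : 1 ≤ K))
  calc ∑ e ∈ T', c ξ e ≤ ∑ e ∈ T, c ξ e :=
        sum_le_sum_of_subset_of_nonneg hT'T fun e he _ => (hcL ξ e (hTG he)).1
    _ ≤ L * Real.log (K * (Fintype.card V : ℝ) ^ 4) := sum_le_mul_log_of_potential_le hL hΦ ξ
    _ = (Real.log K + 4 * Real.log (Fintype.card V)) * L := by
        rw [Real.log_mul (by positivity) (by positivity), Real.log_pow]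
        ring
    _ ≤ 4 * (Real.log (Fintype.card V) + Real.log K) * L := by
        gcongr
        linarith
end

section
/- There exists a universal constant C > 0 such that the following holds. Let G = (V,E) be a connected simple graph on n ≥ 2 vertices and let α > 1 be a real number with the property that for every partition of V into parts each of which induces a connected subgraph of G, the quotient graph H on the parts (two distinct parts adjacent if and only if some edge of G joins them) has an independent set of size at least (number of parts)/α. Let U be a finite set of scenarios with |U| = K ≥ 3, each scenario ξ assigning a nonnegative cost c^ξ_e to every edge e ∈ E, and let x : E → [0,1] satisfy Σ_{e∈δ(S)} x_e ≥ 1 for every nonempty proper S ⊂ V, Σ_{e∈E} c^ξ_e x_e ≤ L for every ξ ∈ U (with L > 0), and c^ξ_e ≤ L whenever x_e > 0. Then there exists a spanning tree T of G with Σ_{e∈T} c^ξ_e ≤ C · α · ln n · (ln K / ln ln K) · L for every ξ ∈ U. -/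
/-!
Borůvka-style phases on a partition of `V` into the trees of a forest. In each phase the
`α`-property yields a `1/α` fraction `I` of pairwise non-adjacent parts. Every part in `I` carries
`x`-weight at least one on its cut, and these cuts are disjoint, so a pessimistic estimator picks
one cut edge per part at cost at most `2 L log K / log log K` in every scenario. The chosen edges
hook each part of `I` onto a part outside `I`, so the forest stays acyclic while the number of
parts shrinks by the factor `1 - 1/α`; after about `α ln n` phases a spanning tree remains.
-/

open SimpleGraph Finset

lemma exp_mul_le_one_add_mul {a t : ℝ} (h0 : 0 ≤ t) (h1 : t ≤ 1) :
    Real.exp (a * t) ≤ 1 + t * (Real.exp a - 1) := by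
  have := convexOn_exp.2 (Set.mem_univ 0) (Set.mem_univ a) (sub_nonneg.2 h1) h0 (by ring)
  simp only [smul_eq_mul, mul_zero, zero_add, Real.exp_zero, mul_one] at this
  rw [mul_comm]; linarith

lemma one_lt_log_of_three_le {K : ℕ} (hK : 3 ≤ K) : 1 < Real.log K := by
  rw [Real.lt_log_iff_exp_lt (by positivity)]
  calc Real.exp 1 < 2.7182818286 := Real.exp_one_lt_d9
    _ < 3 := by norm_num
    _ ≤ K := by exact_mod_cast hK

lemma centerMass_sum_mul {β Ξ : Type*} (S : Finset β) (w : β → ℝ) (U : Finset Ξ) (a : Ξ → ℝ)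
    (g : Ξ → β → ℝ) :
    S.centerMass w (fun e => ∑ ξ ∈ U, a ξ * g ξ e) = ∑ ξ ∈ U, a ξ * S.centerMass w (g ξ) := by
  simp only [centerMass, smul_eq_mul, mul_sum, sum_comm (s := S)]
  exact sum_congr rfl fun _ _ => sum_congr rfl fun _ _ => by ring

/-- The method of conditional expectations: choosing the parts one at a time, each choice can be
made no worse than the average over its part. -/
theorem exists_sum_mul_prod_le_centerMass {Ξ ι β : Type*} [DecidableEq ι] [Nonempty β]
    (U : Finset Ξ) (I : Finset ι) (S : ι → Finset β) (w : β → ℝ) (g : Ξ → β → ℝ)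
    (hS : ∀ i ∈ I, (S i).Nonempty) (hw : ∀ i ∈ I, ∀ e ∈ S i, 0 < w e)
    (hg : ∀ ξ ∈ U, ∀ i ∈ I, ∀ e ∈ S i, 0 ≤ g ξ e) (ρ : Ξ → ℝ) (hρ : ∀ ξ ∈ U, 0 ≤ ρ ξ) :
    ∃ f : ι → β, (∀ i ∈ I, f i ∈ S i) ∧
      ∑ ξ ∈ U, ρ ξ * ∏ i ∈ I, g ξ (f i) ≤
        ∑ ξ ∈ U, ρ ξ * ∏ i ∈ I, (S i).centerMass w (g ξ) := by
  induction I using cons_induction generalizing ρ with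
  | empty => exact ⟨fun _ => Classical.arbitrary β, by simp, by simp⟩
  | cons i J hiJ ih =>
    simp only [forall_mem_cons] at hS hw hg
    set μ := fun ξ => ∏ j ∈ J, (S j).centerMass w (g ξ)
    obtain ⟨e₀, he₀, hmin⟩ := (S i).exists_min_image (fun e => ∑ ξ ∈ U, ρ ξ * g ξ e * μ ξ) hS.1
    have hW : 0 < ∑ e ∈ S i, w e := sum_pos hw.1 hS.1
    have hchoice : ∑ ξ ∈ U, ρ ξ * g ξ e₀ * μ ξ ≤
        ∑ ξ ∈ U, ρ ξ * ((S i).centerMass w (g ξ) * μ ξ) := by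
      calc ∑ ξ ∈ U, ρ ξ * g ξ e₀ * μ ξ
          ≤ (S i).centerMass w (fun e => ∑ ξ ∈ U, (ρ ξ * μ ξ) * g ξ e) := by
            refine le_trans ?_ (inf_le_centerMass (fun e he => (hw.1 e he).le) hW)
            refine le_inf' _ _ fun e he => ?_
            convert hmin e he using 2; ring
        _ = _ := by
            rw [centerMass_sum_mul]
            exact sum_congr rfl fun _ _ => by ring
    obtain ⟨f, hf, hfle⟩ := ih hS.2 hw.2 (fun ξ hξ => (hg ξ hξ).2) (fun ξ => ρ ξ * g ξ e₀)
      (fun ξ hξ => mul_nonneg (hρ ξ hξ) ((hg ξ hξ).1 e₀ he₀))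
    have hupd : ∀ j ∈ J, Function.update f i e₀ j = f j := fun j hj =>
      Function.update_of_ne (by rintro rfl; exact hiJ hj) _ _
    have hprod : ∀ ξ, ∏ j ∈ J, g ξ (Function.update f i e₀ j) = ∏ j ∈ J, g ξ (f j) :=
      fun ξ => prod_congr rfl fun j hj => by rw [hupd j hj]
    refine ⟨Function.update f i e₀, ?_, ?_⟩
    · simp only [forall_mem_cons, Function.update_self]
      exact ⟨he₀, fun j hj => hupd j hj ▸ hf j hj⟩
    · simp only [prod_cons, Function.update_self, hprod]
      calc ∑ ξ ∈ U, ρ ξ * (g ξ e₀ * ∏ j ∈ J, g ξ (f j))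
          = ∑ ξ ∈ U, ρ ξ * g ξ e₀ * ∏ j ∈ J, g ξ (f j) :=
            sum_congr rfl fun _ _ => by ring
        _ ≤ ∑ ξ ∈ U, ρ ξ * g ξ e₀ * μ ξ := hfle
        _ ≤ _ := hchoice

lemma centerMass_exp_le {β : Type*} {S : Finset β} {x c : β → ℝ} {L lam : ℝ} (hL : 0 < L)
    (hlam : 1 ≤ lam) (hS : 1 ≤ ∑ e ∈ S, x e) (hx : ∀ e ∈ S, 0 < x e)
    (hc : ∀ e ∈ S, 0 ≤ c e ∧ c e ≤ L) :
    S.centerMass x (fun e => Real.exp (Real.log lam * (c e / L))) ≤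
      Real.exp ((lam - 1) / L * ∑ e ∈ S, c e * x e) := by
  set y := (lam - 1) / L * ∑ e ∈ S, c e * x e
  have hy : 0 ≤ y := mul_nonneg (div_nonneg (by linarith) hL.le)
    (sum_nonneg fun e he => mul_nonneg (hc e he).1 (hx e he).le)
  have hpoint : ∀ e ∈ S, x e * Real.exp (Real.log lam * (c e / L)) ≤
      x e + (lam - 1) / L * (c e * x e) := by
    intro e he
    have ht0 : 0 ≤ c e / L := div_nonneg (hc e he).1 hL.le
    have ht1 : c e / L ≤ 1 := (div_le_one hL).2 (hc e he).2
    have := exp_mul_le_one_add_mul (a := Real.log lam) ht0 ht1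
    rw [Real.exp_log (by linarith)] at this
    calc x e * Real.exp (Real.log lam * (c e / L)) ≤ x e * (1 + c e / L * (lam - 1)) :=
          mul_le_mul_of_nonneg_left this (hx e he).le
      _ = x e + (lam - 1) / L * (c e * x e) := by field_simp
  have hsum : ∑ e ∈ S, x e * Real.exp (Real.log lam * (c e / L)) ≤ ∑ e ∈ S, x e + y := by
    calc _ ≤ ∑ e ∈ S, (x e + (lam - 1) / L * (c e * x e)) := sum_le_sum hpoint
      _ = _ := by rw [sum_add_distrib, ← mul_sum]
  have hX : 0 < ∑ e ∈ S, x e := by linarith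
  calc S.centerMass x (fun e => Real.exp (Real.log lam * (c e / L)))
      = (∑ e ∈ S, x e * Real.exp (Real.log lam * (c e / L))) / ∑ e ∈ S, x e := by
        simp only [centerMass, smul_eq_mul]; ring
    _ ≤ 1 + y := by
        rw [div_le_iff₀ hX]
        nlinarith
    _ ≤ Real.exp y := by linarith [Real.add_one_le_exp y]

lemma prod_centerMass_exp_le {ι β : Type*} {I : Finset ι} {S : ι → Finset β} {x c : β → ℝ}
    {L lam : ℝ} (hL : 0 < L) (hlam : 1 ≤ lam) (hS : ∀ i ∈ I, 1 ≤ ∑ e ∈ S i, x e)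
    (hx : ∀ i ∈ I, ∀ e ∈ S i, 0 < x e) (hc : ∀ i ∈ I, ∀ e ∈ S i, 0 ≤ c e ∧ c e ≤ L)
    (hsum : ∑ i ∈ I, ∑ e ∈ S i, c e * x e ≤ L) :
    ∏ i ∈ I, (S i).centerMass x (fun e => Real.exp (Real.log lam * (c e / L))) ≤
      Real.exp (lam - 1) := by
  calc ∏ i ∈ I, (S i).centerMass x (fun e => Real.exp (Real.log lam * (c e / L)))
      ≤ ∏ i ∈ I, Real.exp ((lam - 1) / L * ∑ e ∈ S i, c e * x e) := by
        refine prod_le_prod (fun i hi => ?_) fun i hi =>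
          centerMass_exp_le hL hlam (hS i hi) (hx i hi) (hc i hi)
        simp only [centerMass, smul_eq_mul]
        exact mul_nonneg (inv_nonneg.2 (sum_nonneg fun e he => (hx i hi e he).le))
          (sum_nonneg fun e he => mul_nonneg (hx i hi e he).le (Real.exp_pos _).le)
    _ = Real.exp ((lam - 1) / L * ∑ i ∈ I, ∑ e ∈ S i, c e * x e) := by
        rw [← Real.exp_sum, mul_sum]
    _ ≤ Real.exp ((lam - 1) / L * L) := by gcongr
    _ = Real.exp (lam - 1) := by field_simp

noncomputable def phaseBound (K : ℕ) (L : ℝ) : ℝ :=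
  2 * (Real.log K / Real.log (Real.log K)) * L

lemma phaseBound_nonneg {K : ℕ} (hK : 3 ≤ K) {L : ℝ} (hL : 0 ≤ L) : 0 ≤ phaseBound K L := by
  have hlam := one_lt_log_of_three_le hK
  unfold phaseBound
  have := Real.log_pos hlam
  positivity

/-- Pessimistic estimator with the potential `∑_ξ (log K) ^ (∑ᵢ c ξ (f i) / L)`: its average value
is at most `K · exp (log K - 1)`, so some selection keeps every scenario below
`2 L log K / log log K`. -/
theorem exists_selection_sum_le {Ξ ι β : Type*} [Fintype Ξ] [DecidableEq ι] [Nonempty β]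
    (hK : 3 ≤ Fintype.card Ξ) {L : ℝ} (hL : 0 < L) {I : Finset ι} {S : ι → Finset β}
    {x : β → ℝ} {c : Ξ → β → ℝ}
    (hS : ∀ i ∈ I, 1 ≤ ∑ e ∈ S i, x e) (hx : ∀ i ∈ I, ∀ e ∈ S i, 0 < x e)
    (hc : ∀ ξ, ∀ i ∈ I, ∀ e ∈ S i, 0 ≤ c ξ e ∧ c ξ e ≤ L)
    (hsum : ∀ ξ, ∑ i ∈ I, ∑ e ∈ S i, c ξ e * x e ≤ L) :
    ∃ f : ι → β, (∀ i ∈ I, f i ∈ S i) ∧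
      ∀ ξ, ∑ i ∈ I, c ξ (f i) ≤ phaseBound (Fintype.card Ξ) L := by
  set K := Fintype.card Ξ
  set lam := Real.log K
  have hlam : 1 < lam := one_lt_log_of_three_le hK
  have hloglam : 0 < Real.log lam := Real.log_pos hlam
  set g : Ξ → β → ℝ := fun ξ e => Real.exp (Real.log lam * (c ξ e / L))
  have hSne : ∀ i ∈ I, (S i).Nonempty := fun i hi =>
    nonempty_of_sum_ne_zero (by linarith [hS i hi] : ∑ e ∈ S i, x e ≠ 0)
  obtain ⟨f, hf, hfle⟩ := exists_sum_mul_prod_le_centerMass univ I S x g hSne hx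
    (fun _ _ _ _ _ _ => (Real.exp_pos _).le) 1 (fun _ _ => zero_le_one)
  simp only [Pi.one_apply, one_mul] at hfle
  have hprod : ∀ ξ, ∏ i ∈ I, (S i).centerMass x (g ξ) ≤ Real.exp (lam - 1) := fun ξ =>
    prod_centerMass_exp_le hL hlam.le hS hx (hc ξ) (hsum ξ)
  refine ⟨f, hf, fun ξ₀ => ?_⟩
  have hpot : Real.exp (Real.log lam / L * ∑ i ∈ I, c ξ₀ (f i)) ≤ Real.exp (2 * lam) := by
    calc Real.exp (Real.log lam / L * ∑ i ∈ I, c ξ₀ (f i))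
        = ∏ i ∈ I, g ξ₀ (f i) := by
          rw [← Real.exp_sum, mul_sum]
          exact congrArg Real.exp (sum_congr rfl fun _ _ => by ring)
      _ ≤ ∑ ξ, ∏ i ∈ I, g ξ (f i) :=
          single_le_sum (f := fun ξ => ∏ i ∈ I, g ξ (f i))
            (fun _ _ => prod_nonneg fun _ _ => (Real.exp_pos _).le) (mem_univ ξ₀)
      _ ≤ ∑ ξ, ∏ i ∈ I, (S i).centerMass x (g ξ) := hfle
      _ ≤ ∑ _ξ : Ξ, Real.exp (lam - 1) := sum_le_sum fun ξ _ => hprod ξ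
      _ = Real.exp (2 * lam - 1) := by
          rw [sum_const, card_univ, nsmul_eq_mul,
            show (K : ℝ) = Real.exp lam from (Real.exp_log (by positivity)).symm, ← Real.exp_add]
          ring_nf
      _ ≤ Real.exp (2 * lam) := by gcongr; linarith
  rw [Real.exp_le_exp, div_mul_eq_mul_div, div_le_iff₀ hL] at hpot
  rw [phaseBound, show 2 * (lam / Real.log lam) * L = 2 * lam * L / Real.log lam by ring,
    le_div_iff₀ hloglam]
  linarith

lemma mul_log_add_one_le {α m m' : ℝ} (hα : 1 < α) (hm' : 0 < m') (h : α * m' ≤ (α - 1) * m) :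
    α * Real.log m' + 1 ≤ α * Real.log m := by
  have hm : 0 < m := by nlinarith
  have hlog := Real.one_sub_inv_le_log_of_pos (div_pos hm hm')
  rw [Real.log_div hm.ne' hm'.ne', inv_div] at hlog
  have hratio : α * (m' / m) ≤ α - 1 := by
    rw [mul_div_assoc', div_le_iff₀ hm]; linarith
  nlinarith

lemma SimpleGraph.Reachable.exists_induce_reachable {V : Type*} {H G : SimpleGraph V} (hHG : H ≤ G)
    {s : Set V} (hs : ∀ ⦃a b⦄, H.Adj a b → a ∈ s → b ∈ s) {a b : V} (h : H.Reachable a b)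
    (ha : a ∈ s) : ∃ hb : b ∈ s, (G.induce s).Reachable ⟨a, ha⟩ ⟨b, hb⟩ := by
  obtain ⟨w⟩ := h
  induction w with
  | nil => exact ⟨ha, .rfl⟩
  | cons hadj _ ih =>
    obtain ⟨hb, hr⟩ := ih (hs hadj ha)
    have hadj' : (G.induce s).Adj ⟨_, ha⟩ ⟨_, hs hadj ha⟩ := hHG hadj
    exact ⟨hb, hadj'.reachable.trans hr⟩

lemma isAcyclic_fromEdgeSet_insert {V : Type*} {s : Set (Sym2 V)} {u v : V}
    (hs : (fromEdgeSet s).IsAcyclic) (huv : ¬ (fromEdgeSet s).Reachable u v) :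
    (fromEdgeSet (insert s(u, v) s)).IsAcyclic := by
  rw [Set.insert_eq, fromEdgeSet_union, sup_comm]
  exact hs.sup_edge_of_not_reachable huv

section Attach

variable {V : Type*} [DecidableEq V]

def attachParts (I : Finset (Finset V)) (Q : Finset V → Finset V) (q : Finset V) : Finset V :=
  q ∪ (I.filter (Q · = q)).biUnion id

lemma mem_attachParts {I : Finset (Finset V)} {Q : Finset V → Finset V} {q : Finset V} {v : V} :
    v ∈ attachParts I Q q ↔ v ∈ q ∨ ∃ j ∈ I, Q j = q ∧ v ∈ j := by
  simp [attachParts, and_assoc]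

lemma subset_attachParts {P I : Finset (Finset V)} {Q : Finset V → Finset V}
    (hQ : ∀ i ∈ I, Q i ∈ P \ I) {p : Finset V} (hp : p ∈ P) :
    ∃ q ∈ P \ I, p ⊆ attachParts I Q q := by
  by_cases hpI : p ∈ I
  · exact ⟨Q p, hQ p hpI, fun v hv => mem_attachParts.2 (Or.inr ⟨p, hpI, rfl, hv⟩)⟩
  · exact ⟨p, mem_sdiff.2 ⟨hp, hpI⟩, fun v hv => mem_attachParts.2 (Or.inl hv)⟩

end Attach

section ForestPartition

variable {V : Type*} [Fintype V] [DecidableEq V]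

/-- The parts of `P` are the vertex sets of the trees of a forest `F` of `G`. -/
structure IsForestPartition (G : SimpleGraph V) (P : Finset (Finset V)) (F : Finset (Sym2 V)) :
    Prop where
  nonempty : ∀ p ∈ P, p.Nonempty
  disjoint : ∀ p ∈ P, ∀ q ∈ P, p ≠ q → Disjoint p q
  biUnion_eq : P.biUnion id = univ
  edge_mem : ∀ e ∈ F, ∃ p ∈ P, ∀ v ∈ e, v ∈ p
  reachable : ∀ p ∈ P, ∀ a ∈ p, ∀ b ∈ p, (fromEdgeSet (F : Set (Sym2 V))).Reachable a b
  subset_edgeSet : (F : Set (Sym2 V)) ⊆ G.edgeSet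
  isAcyclic : (fromEdgeSet (F : Set (Sym2 V))).IsAcyclic

lemma isForestPartition_singletons (G : SimpleGraph V) :
    IsForestPartition G (univ.image ({·})) ∅ where
  nonempty := by simp
  disjoint := by simp [eq_comm]
  biUnion_eq := by ext v; simp
  edge_mem := by simp
  reachable := by
    simp only [mem_image, mem_univ, true_and, forall_exists_index, forall_apply_eq_imp_iff,
      mem_singleton]
    rintro v a rfl b rfl
    rfl
  subset_edgeSet := by simp
  isAcyclic := by simp

namespace IsForestPartition

variable {G : SimpleGraph V} {P : Finset (Finset V)} {F : Finset (Sym2 V)}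

lemma exists_mem (h : IsForestPartition G P F) (v : V) : ∃ p ∈ P, v ∈ p := by
  have hv : v ∈ P.biUnion id := h.biUnion_eq ▸ mem_univ v
  simpa using hv

lemma eq_of_mem (h : IsForestPartition G P F) {p q : Finset V} (hp : p ∈ P) (hq : q ∈ P)
    {v : V} (hvp : v ∈ p) (hvq : v ∈ q) : p = q :=
  by_contra fun hne => Finset.disjoint_left.1 (h.disjoint p hp q hq hne) hvp hvq

lemma mem_of_adj (h : IsForestPartition G P F) {p : Finset V} (hp : p ∈ P) {a b : V}
    (hab : (fromEdgeSet (F : Set (Sym2 V))).Adj a b) (ha : a ∈ p) : b ∈ p := by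
  obtain ⟨q, hq, hmem⟩ := h.edge_mem _ ((fromEdgeSet_adj _).1 hab).1
  rw [h.eq_of_mem hp hq ha (hmem a (Sym2.mem_mk_left a b))]
  exact hmem b (Sym2.mem_mk_right a b)

lemma induce_connected (h : IsForestPartition G P F) {p : Finset V} (hp : p ∈ P) :
    (G.induce (p : Set V)).Connected := by
  obtain ⟨v, hv⟩ := h.nonempty p hp
  have hle : fromEdgeSet (F : Set (Sym2 V)) ≤ G := fun a b hab =>
    h.subset_edgeSet ((fromEdgeSet_adj _).1 hab).1
  refine (connected_iff_exists_forall_reachable _).2 ⟨⟨v, hv⟩, fun ⟨b, hb⟩ => ?_⟩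
  exact ((h.reachable p hp v hv b hb).exists_induce_reachable hle
    (fun _ _ hab ha => h.mem_of_adj hp hab ha) hv).2

lemma card_pos [Nonempty V] (h : IsForestPartition G P F) : 0 < P.card := by
  obtain ⟨p, hp, -⟩ := h.exists_mem (Classical.arbitrary V)
  exact Finset.card_pos.2 ⟨p, hp⟩

lemma connected_of_card_eq_one (h : IsForestPartition G P F) (hP : P.card = 1) :
    (fromEdgeSet (F : Set (Sym2 V))).Connected := by
  obtain ⟨p, rfl⟩ := card_eq_one.1 hP
  have hp : ∀ v, v ∈ p := fun v => by
    obtain ⟨q, hq, hv⟩ := h.exists_mem v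
    rwa [mem_singleton.1 hq] at hv
  obtain ⟨v, -⟩ := h.nonempty p (mem_singleton_self p)
  exact (connected_iff _).2
    ⟨fun a b => h.reachable p (mem_singleton_self p) a (hp a) b (hp b), ⟨v⟩⟩

lemma ne_univ (h : IsForestPartition G P F) (hP : 2 ≤ P.card) {p : Finset V} (hp : p ∈ P) :
    p ≠ univ := by
  rintro rfl
  obtain ⟨q, hq, hqp⟩ := exists_mem_ne hP univ
  obtain ⟨v, hv⟩ := h.nonempty q hq
  exact hqp (h.eq_of_mem hq hp hv (mem_univ v))


variable {I : Finset (Finset V)} {Q : Finset V → Finset V} {A B : Finset V → V}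

lemma disjoint_attachParts (h : IsForestPartition G P F) (hIP : I ⊆ P) {q q' : Finset V}
    (hq : q ∈ P \ I) (hq' : q' ∈ P \ I) (hne : q ≠ q') :
    Disjoint (attachParts I Q q) (attachParts I Q q') := by
  rw [mem_sdiff] at hq hq'
  rw [Finset.disjoint_left]
  intro v hv hv'
  rcases mem_attachParts.1 hv with hvq | ⟨j, hj, rfl, hvj⟩ <;>
    rcases mem_attachParts.1 hv' with hvq' | ⟨j', hj', rfl, hvj'⟩
  · exact hne (h.eq_of_mem hq.1 hq'.1 hvq hvq')
  · exact hq.2 (h.eq_of_mem (hIP hj') hq.1 hvj' hvq ▸ hj')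
  · exact hq'.2 (h.eq_of_mem (hIP hj) hq'.1 hvj hvq' ▸ hj)
  · exact hne (congrArg Q (h.eq_of_mem (hIP hj) (hIP hj') hvj hvj'))

lemma card_image_attachParts (h : IsForestPartition G P F) (hIP : I ⊆ P) :
    ((P \ I).image (attachParts I Q)).card = P.card - I.card := by
  rw [card_image_of_injOn, card_sdiff_of_subset hIP]
  intro q hq q' hq' heq
  by_contra hne
  obtain ⟨v, hv⟩ := h.nonempty q (mem_sdiff.1 hq).1
  exact Finset.disjoint_left.1 (h.disjoint_attachParts hIP hq hq' hne)
    (mem_attachParts.2 (Or.inl hv)) (heq ▸ mem_attachParts.2 (Or.inl hv))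

lemma isAcyclic_attach (h : IsForestPartition G P F) (hIP : I ⊆ P) (hA : ∀ i ∈ I, A i ∈ i)
    (hQ : ∀ i ∈ I, Q i ∈ P \ I) (hB : ∀ i ∈ I, B i ∈ Q i) :
    (fromEdgeSet (↑(F ∪ I.image fun i => s(A i, B i)) : Set (Sym2 V))).IsAcyclic := by
  have hQ_ne : ∀ i ∈ I, ∀ j ∈ I, Q j ≠ i := fun i hi j hj hQj =>
    (mem_sdiff.1 (hQ j hj)).2 (hQj ▸ hi)
  have hout : ∀ i ∈ I, ∀ j ∈ I, j ≠ i → ∀ v ∈ s(A j, B j), v ∉ i := by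
    intro i hi j hj hji v hv hvi
    rcases Sym2.mem_iff.1 hv with rfl | rfl
    · exact hji (h.eq_of_mem (hIP hj) (hIP hi) (hA j hj) hvi)
    · exact hQ_ne i hi j hj (h.eq_of_mem (mem_sdiff.1 (hQ j hj)).1 (hIP hi) (hB j hj) hvi)
  suffices ∀ J ⊆ I, (fromEdgeSet (↑(F ∪ J.image fun i => s(A i, B i)) : Set (Sym2 V))).IsAcyclic
    from this I subset_rfl
  intro J
  induction J using Finset.induction_on with
  | empty => simpa using h.isAcyclic
  | insert i J hiJ ih =>
    intro hJ
    have hi : i ∈ I := hJ (mem_insert_self i J)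
    rw [image_insert, union_insert, coe_insert]
    refine isAcyclic_fromEdgeSet_insert (ih ((subset_insert i J).trans hJ)) fun hr => ?_
    -- the new edge leaves `i`, while no edge of `F` or of the other parts of `J` does
    have hclosed : ∀ ⦃a b⦄, (fromEdgeSet (↑(F ∪ J.image fun i => s(A i, B i)) :
        Set (Sym2 V))).Adj a b → a ∈ (i : Set V) → b ∈ (i : Set V) := by
      intro a b hab ha
      obtain ⟨hmem, hne⟩ := (fromEdgeSet_adj _).1 hab
      rcases mem_union.1 hmem with hF | hJe
      · exact h.mem_of_adj (hIP hi) ((fromEdgeSet_adj _).2 ⟨hF, hne⟩) ha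
      · obtain ⟨j, hj, hje⟩ := mem_image.1 hJe
        exact absurd ha (hout i hi j (hJ (mem_insert_of_mem hj)) (by rintro rfl; exact hiJ hj)
          a (hje ▸ Sym2.mem_mk_left a b))
    obtain ⟨hBi, -⟩ := hr.exists_induce_reachable le_rfl hclosed (hA i hi)
    exact hQ_ne i hi i hi (h.eq_of_mem (mem_sdiff.1 (hQ i hi)).1 (hIP hi) (hB i hi) hBi)

lemma attach (h : IsForestPartition G P F) (hIP : I ⊆ P) (hA : ∀ i ∈ I, A i ∈ i)
    (hQ : ∀ i ∈ I, Q i ∈ P \ I) (hB : ∀ i ∈ I, B i ∈ Q i)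
    (hAB : ∀ i ∈ I, G.Adj (A i) (B i)) :
    IsForestPartition G ((P \ I).image (attachParts I Q)) (F ∪ I.image fun i => s(A i, B i)) where
  nonempty := by
    simp only [mem_image, forall_exists_index, and_imp, forall_apply_eq_imp_iff₂]
    intro q hq
    obtain ⟨v, hv⟩ := h.nonempty q (mem_sdiff.1 hq).1
    exact ⟨v, mem_attachParts.2 (Or.inl hv)⟩
  disjoint := by
    simp only [mem_image, forall_exists_index, and_imp, forall_apply_eq_imp_iff₂]
    intro q hq q' hq' hne
    exact h.disjoint_attachParts hIP hq hq' fun heq => hne (heq ▸ rfl)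
  biUnion_eq := by
    refine eq_univ_of_forall fun v => ?_
    obtain ⟨p, hp, hv⟩ := h.exists_mem v
    obtain ⟨q, hq, hpq⟩ := subset_attachParts hQ hp
    exact mem_biUnion.2 ⟨_, mem_image_of_mem _ hq, hpq hv⟩
  edge_mem := by
    intro e he
    rcases mem_union.1 he with hF | hI
    · obtain ⟨p, hp, hep⟩ := h.edge_mem e hF
      obtain ⟨q, hq, hpq⟩ := subset_attachParts hQ hp
      exact ⟨_, mem_image_of_mem _ hq, fun v hv => hpq (hep v hv)⟩
    · obtain ⟨i, hi, rfl⟩ := mem_image.1 hI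
      refine ⟨_, mem_image_of_mem _ (hQ i hi), fun v hv => ?_⟩
      rcases Sym2.mem_iff.1 hv with rfl | rfl
      · exact mem_attachParts.2 (Or.inr ⟨i, hi, rfl, hA i hi⟩)
      · exact mem_attachParts.2 (Or.inl (hB i hi))
  reachable := by
    set H := fromEdgeSet (↑(F ∪ I.image fun i => s(A i, B i)) : Set (Sym2 V))
    have hmono : fromEdgeSet (F : Set (Sym2 V)) ≤ H :=
      fromEdgeSet_mono (coe_subset.2 subset_union_left)
    simp only [mem_image, forall_exists_index, and_imp, forall_apply_eq_imp_iff₂]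
    intro q hq
    have hqP := (mem_sdiff.1 hq).1
    obtain ⟨w, hw⟩ := h.nonempty q hqP
    suffices hvw : ∀ v ∈ attachParts I Q q, H.Reachable v w from
      fun a ha b hb => (hvw a ha).trans (hvw b hb).symm
    intro v hv
    rcases mem_attachParts.1 hv with hvq | ⟨j, hj, rfl, hvj⟩
    · exact (h.reachable _ hqP v hvq w hw).mono hmono
    · have hnew : H.Adj (A j) (B j) :=
        (fromEdgeSet_adj _).2 ⟨mem_union_right _ (mem_image_of_mem _ hj), (hAB j hj).ne⟩
      exact ((h.reachable j (hIP hj) v hvj (A j) (hA j hj)).mono hmono).trans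
        (hnew.reachable.trans ((h.reachable _ hqP (B j) (hB j hj) w hw).mono hmono))
  subset_edgeSet := by
    intro e he
    rcases mem_union.1 he with hF | hI
    · exact h.subset_edgeSet hF
    · obtain ⟨i, hi, rfl⟩ := mem_image.1 hI
      exact hAB i hi
  isAcyclic := h.isAcyclic_attach hIP hA hQ hB

end IsForestPartition

open scoped Classical in
noncomputable def cutFinset (G : SimpleGraph V) (S : Finset V) : Finset (Sym2 V) :=
  G.edgeFinset.filter fun e => ∃ a b, e = s(a, b) ∧ a ∈ S ∧ b ∉ S

open scoped Classical in
structure IsFractionalSolution (G : SimpleGraph V) {Ξ : Type*} (c : Ξ → Sym2 V → ℝ)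
    (x : Sym2 V → ℝ) (L : ℝ) : Prop where
  cost_nonneg : ∀ ξ, ∀ e ∈ G.edgeSet, 0 ≤ c ξ e
  nonneg : ∀ e, 0 ≤ x e
  one_le_sum_cut : ∀ S : Finset V, S.Nonempty → S ≠ univ → 1 ≤ ∑ e ∈ cutFinset G S, x e
  sum_le : ∀ ξ, ∑ e ∈ G.edgeFinset, c ξ e * x e ≤ L
  cost_le : ∀ ξ, ∀ e ∈ G.edgeSet, 0 < x e → c ξ e ≤ L

def PairwiseNonadjacent (G : SimpleGraph V) (I : Finset (Finset V)) : Prop :=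
  ∀ p ∈ I, ∀ q ∈ I, p ≠ q → ∀ a ∈ p, ∀ b ∈ q, ¬ G.Adj a b

def HasLargeIndependentParts (G : SimpleGraph V) (α : ℝ) : Prop :=
  ∀ P : Finset (Finset V), (∀ p ∈ P, p.Nonempty) → (∀ p ∈ P, ∀ q ∈ P, p ≠ q → Disjoint p q) →
    P.biUnion id = univ → (∀ p ∈ P, (G.induce (p : Set V)).Connected) →
    ∃ I ⊆ P, PairwiseNonadjacent G I ∧ (P.card : ℝ) ≤ α * I.card

lemma mem_cutFinset {G : SimpleGraph V} {S : Finset V} {e : Sym2 V} :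
    e ∈ cutFinset G S ↔ e ∈ G.edgeSet ∧ ∃ a b, e = s(a, b) ∧ a ∈ S ∧ b ∉ S := by
  classical
  simp [cutFinset]

namespace IsForestPartition

variable {G : SimpleGraph V} {P I : Finset (Finset V)} {F : Finset (Sym2 V)}

lemma exists_attach_of_mem_cutFinset (h : IsForestPartition G P F)
    (hI : PairwiseNonadjacent G I) {i : Finset V} (hi : i ∈ I) {e : Sym2 V}
    (he : e ∈ cutFinset G i) :
    ∃ a b q, e = s(a, b) ∧ a ∈ i ∧ G.Adj a b ∧ q ∈ P \ I ∧ b ∈ q := by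
  obtain ⟨hG, a, b, rfl, ha, hb⟩ := mem_cutFinset.1 he
  obtain ⟨q, hq, hbq⟩ := h.exists_mem b
  refine ⟨a, b, q, rfl, ha, hG, mem_sdiff.2 ⟨hq, fun hqI => ?_⟩, hbq⟩
  exact hI i hi q hqI (by rintro rfl; exact hb hbq) a ha b hbq hG

lemma disjoint_cutFinset (h : IsForestPartition G P F) (hIP : I ⊆ P)
    (hI : PairwiseNonadjacent G I) {i j : Finset V} (hi : i ∈ I) (hj : j ∈ I) (hij : i ≠ j) :
    Disjoint (cutFinset G i) (cutFinset G j) := by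
  refine Finset.disjoint_left.2 fun e hei hej => ?_
  obtain ⟨hG, a, b, rfl, ha, hb⟩ := mem_cutFinset.1 hei
  obtain ⟨-, a', b', he, ha', hb'⟩ := mem_cutFinset.1 hej
  rcases Sym2.eq_iff.1 he with ⟨rfl, rfl⟩ | ⟨rfl, rfl⟩
  · exact hij (h.eq_of_mem (hIP hi) (hIP hj) ha ha')
  · exact hI i hi j hj hij a ha b ha' hG

variable {Ξ : Type*} [Fintype Ξ] {c : Ξ → Sym2 V → ℝ} {x : Sym2 V → ℝ} {L : ℝ}

theorem exists_cut_selection [Nonempty V] (h : IsForestPartition G P F) (hP : 2 ≤ P.card)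
    (hIP : I ⊆ P) (hI : PairwiseNonadjacent G I) (hK : 3 ≤ Fintype.card Ξ) (hL : 0 < L)
    (hsol : IsFractionalSolution G c x L) :
    ∃ f : Finset V → Sym2 V, (∀ i ∈ I, f i ∈ cutFinset G i) ∧
      ∀ ξ, ∑ i ∈ I, c ξ (f i) ≤ phaseBound (Fintype.card Ξ) L := by
  classical
  have : Nonempty (Sym2 V) := ⟨s(Classical.arbitrary V, Classical.arbitrary V)⟩
  set S : Finset V → Finset (Sym2 V) := fun i => (cutFinset G i).filter (0 < x ·)
  have hS_edge : ∀ i, ∀ e ∈ S i, e ∈ G.edgeSet ∧ 0 < x e := fun i e he =>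
    ⟨(mem_cutFinset.1 (mem_filter.1 he).1).1, (mem_filter.1 he).2⟩
  have hS_one : ∀ i ∈ I, 1 ≤ ∑ e ∈ S i, x e := fun i hi => by
    rw [sum_filter_of_ne fun e _ hne => (hsol.nonneg e).lt_of_ne' hne]
    exact hsol.one_le_sum_cut i (h.nonempty i (hIP hi)) (h.ne_univ hP (hIP hi))
  have hS_sum : ∀ ξ, ∑ i ∈ I, ∑ e ∈ S i, c ξ e * x e ≤ L := by
    intro ξ
    rw [← sum_biUnion fun i hi j hj hij => (h.disjoint_cutFinset hIP hI hi hj hij).mono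
      (filter_subset _ _) (filter_subset _ _)]
    refine le_trans (sum_le_sum_of_subset_of_nonneg ?_ ?_) (hsol.sum_le ξ)
    · intro e he
      obtain ⟨i, -, he⟩ := mem_biUnion.1 he
      exact mem_edgeFinset.2 (hS_edge i e he).1
    · exact fun e he _ => mul_nonneg (hsol.cost_nonneg ξ e (mem_edgeFinset.1 he)) (hsol.nonneg e)
  obtain ⟨f, hf, hfcost⟩ := exists_selection_sum_le hK hL hS_one
    (fun i _ e he => (hS_edge i e he).2)
    (fun ξ i _ e he => ⟨hsol.cost_nonneg ξ e (hS_edge i e he).1,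
      hsol.cost_le ξ e (hS_edge i e he).1 (hS_edge i e he).2⟩) hS_sum
  exact ⟨f, fun i hi => (mem_filter.1 (hf i hi)).1, hfcost⟩

theorem exists_attach_sum_le [Nonempty V] (h : IsForestPartition G P F) (hP : 2 ≤ P.card)
    (hIP : I ⊆ P) (hI : PairwiseNonadjacent G I) (hK : 3 ≤ Fintype.card Ξ) (hL : 0 < L)
    (hsol : IsFractionalSolution G c x L) :
    ∃ P' F', IsForestPartition G P' F' ∧ P'.card = P.card - I.card ∧
      ∀ ξ, ∑ e ∈ F', c ξ e ≤ ∑ e ∈ F, c ξ e + phaseBound (Fintype.card Ξ) L := by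
  obtain ⟨f, hf, hfcost⟩ := h.exists_cut_selection hP hIP hI hK hL hsol
  choose! A B Q hfAB hA hAB hQ hB using fun i (hi : i ∈ I) =>
    h.exists_attach_of_mem_cutFinset hI hi (hf i hi)
  refine ⟨_, _, h.attach hIP hA hQ hB hAB, h.card_image_attachParts hIP, fun ξ => ?_⟩
  calc ∑ e ∈ F ∪ I.image (fun i => s(A i, B i)), c ξ e
      ≤ ∑ e ∈ F, c ξ e + ∑ e ∈ I.image (fun i => s(A i, B i)), c ξ e := by
        rw [← sum_union_inter]
        exact le_add_of_nonneg_right (sum_nonneg fun e he =>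
          hsol.cost_nonneg ξ e (h.subset_edgeSet (mem_inter.1 he).1))
    _ ≤ ∑ e ∈ F, c ξ e + ∑ i ∈ I, c ξ (f i) := by
        gcongr
        rw [sum_congr rfl fun i hi => congrArg (c ξ) (hfAB i hi)]
        refine sum_image_le_of_nonneg fun e he => ?_
        obtain ⟨i, hi, rfl⟩ := mem_image.1 he
        exact hsol.cost_nonneg ξ _ (hAB i hi)
    _ ≤ ∑ e ∈ F, c ξ e + phaseBound (Fintype.card Ξ) L := by gcongr; exact hfcost ξ

theorem exists_spanning_tree [Nonempty V] {α : ℝ} (h : IsForestPartition G P F) (hα : 1 < α)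
    (hpart : HasLargeIndependentParts G α) (hK : 3 ≤ Fintype.card Ξ) (hL : 0 < L)
    (hsol : IsFractionalSolution G c x L) :
    ∃ T : Finset (Sym2 V), ↑T ⊆ G.edgeSet ∧ (fromEdgeSet (T : Set (Sym2 V))).Connected ∧
      (fromEdgeSet (T : Set (Sym2 V))).IsAcyclic ∧
      ∀ ξ, ∑ e ∈ T, c ξ e ≤
        ∑ e ∈ F, c ξ e + phaseBound (Fintype.card Ξ) L * (α * Real.log P.card) := by
  induction hm : P.card using Nat.strong_induction_on generalizing P F with
  | _ m ih =>
  obtain hm1 | hm2 : m = 1 ∨ 2 ≤ m := by have := h.card_pos; omega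
  · refine ⟨F, h.subset_edgeSet, h.connected_of_card_eq_one (hm ▸ hm1), h.isAcyclic, fun ξ => ?_⟩
    simp [hm1]
  obtain ⟨I, hIP, hI, hcard⟩ :=
    hpart P h.nonempty h.disjoint h.biUnion_eq fun p hp => h.induce_connected hp
  obtain ⟨P', F', h', hcard', hcost⟩ := h.exists_attach_sum_le (hm ▸ hm2) hIP hI hK hL hsol
  have hIle : I.card ≤ P.card := card_le_card hIP
  have hIpos : 0 < I.card := by
    by_contra! h0
    have hm2' : (2 : ℝ) ≤ m := by exact_mod_cast hm2
    rw [Nat.le_zero.1 h0, hm] at hcard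
    simp only [CharP.cast_eq_zero, mul_zero] at hcard
    linarith
  obtain ⟨T, hTG, hTconn, hTacyc, hTcost⟩ := ih _ (by omega) h' rfl
  refine ⟨T, hTG, hTconn, hTacyc, fun ξ => ?_⟩
  have hlog : α * Real.log P'.card + 1 ≤ α * Real.log m := by
    refine mul_log_add_one_le hα (by exact_mod_cast h'.card_pos) ?_
    rw [hcard', Nat.cast_sub hIle, ← hm]
    linarith
  have hD := phaseBound_nonneg hK hL.le
  calc ∑ e ∈ T, c ξ e
      ≤ ∑ e ∈ F, c ξ e + phaseBound (Fintype.card Ξ) L * (α * Real.log P'.card + 1) := by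
        linarith [hTcost ξ, hcost ξ]
    _ ≤ _ := by gcongr

end IsForestPartition

end ForestPartition

open scoped Classical in
/-- The deterministic `O(log n · log K / log log K)`-approximation theorem for
min-max spanning tree, for graphs with the `α`-independence property: whenever
`V` is partitioned into parts inducing connected subgraphs, among the parts one
can find at least a `1/α` fraction that are pairwise non-adjacent in `G`.
Given a fractional solution `x` crossing every cut with weight `≥ 1`, of max
scenario cost `≤ L` and support edge costs `≤ L`, there is a spanning tree `T`
with `Σ_{e∈T} c ξ e ≤ C·α·ln n·(ln K / ln ln K)·L` for every scenario `ξ`. -/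
theorem stmt6 :
    ∃ C : ℝ, 0 < C ∧
      ∀ (V : Type) [Fintype V] [DecidableEq V] (G : SimpleGraph V)
        (α : ℝ) (K : ℕ) (c : Fin K → Sym2 V → ℝ) (x : Sym2 V → ℝ) (L : ℝ),
        2 ≤ Fintype.card V → G.Connected → 1 < α → 3 ≤ K → 0 < L →
        (∀ P : Finset (Finset V),
          (∀ p ∈ P, p.Nonempty) →
          (∀ p ∈ P, ∀ q ∈ P, p ≠ q → Disjoint p q) →
          (P.biUnion id = Finset.univ) →
          (∀ p ∈ P, (G.induce (↑p : Set V)).Connected) →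
          ∃ I ⊆ P,
            (∀ p ∈ I, ∀ q ∈ I, p ≠ q → ∀ a ∈ p, ∀ b ∈ q, ¬ G.Adj a b) ∧
            (P.card : ℝ) ≤ α * I.card) →
        (∀ ξ, ∀ e ∈ G.edgeSet, 0 ≤ c ξ e) →
        (∀ e, 0 ≤ x e ∧ x e ≤ 1) →
        (∀ S : Finset V, S.Nonempty → S ≠ Finset.univ →
          1 ≤ ∑ e ∈ G.edgeFinset.filter
            (fun e => ∃ a b, e = s(a, b) ∧ a ∈ S ∧ b ∉ S), x e) →
        (∀ ξ, ∑ e ∈ G.edgeFinset, c ξ e * x e ≤ L) →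
        (∀ ξ, ∀ e ∈ G.edgeSet, 0 < x e → c ξ e ≤ L) →
        ∃ T : Finset (Sym2 V), ↑T ⊆ G.edgeSet ∧
          (fromEdgeSet (↑T : Set (Sym2 V))).Connected ∧
          (fromEdgeSet (↑T : Set (Sym2 V))).IsAcyclic ∧
          ∀ ξ, ∑ e ∈ T, c ξ e ≤
            C * α * Real.log (Fintype.card V) *
              (Real.log K / Real.log (Real.log K)) * L := by
  refine ⟨2, two_pos, fun V _ _ G α K c x L hn _ hα hK hL hpart hc0 hx hcut hfrac hsupp => ?_⟩
  have : Nonempty V := Fintype.card_pos_iff.1 (by omega)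
  have hsol : IsFractionalSolution G c x L := ⟨hc0, fun e => (hx e).1, hcut, hfrac, hsupp⟩
  obtain ⟨T, hTG, hTconn, hTacyc, hTcost⟩ := (isForestPartition_singletons G).exists_spanning_tree
    hα hpart (by simpa using hK) hL hsol
  refine ⟨T, hTG, hTconn, hTacyc, fun ξ => (hTcost ξ).trans_eq ?_⟩
  rw [card_image_of_injective _ singleton_injective, card_univ, phaseBound, Fintype.card_fin,
    sum_empty, zero_add]
  ring
end

section
/- Let V be a finite set, A ⊆ V × V a set of arcs, l : A → {0,1} arc lengths, s, t ∈ V, and d : V → ℕ a function with d(s) = 0 and d(v) ≤ d(u) + l(u,v) for every arc (u,v) ∈ A. For each integer i ≥ 1, let E_i = {(u,v) ∈ A : d(u) = i−1 and d(v) = i}. Then: (a) the sets E_i are pairwise disjoint; (b) no arc e with l(e) = 0 belongs to any E_i; and (c) for every walk v_0 = s, v_1, …, v_m = t with (v_j, v_{j+1}) ∈ A for all j, and for every i with 1 ≤ i ≤ d(t), there exists an index j < m with d(v_j) = i−1, d(v_{j+1}) = i and l(v_j, v_{j+1}) = 1; in particular each E_i with 1 ≤ i ≤ d(t) is an s–t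 cut-set containing only arcs of length 1. -/
/-! The potential `d` rises by at most `l e ≤ 1` along an arc `e`, and it rises from `d s = 0`
to `d t` along any `s`–`t` walk. Hence for each level `1 ≤ i ≤ d t` the walk has a first step
that reaches `d ≥ i`; that step goes from level `i - 1` to level `i` and has length exactly `1`. -/

theorem Nat.exists_lt_le_succ_of_lt_of_le {f : ℕ → ℕ} {i m : ℕ} (h0 : f 0 < i) (hm : i ≤ f m) :
    ∃ j < m, f j < i ∧ i ≤ f (j + 1) := by
  obtain ⟨j, hj, hj1⟩ := Nat.exists_not_and_succ_of_not_zero_of_exists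
    (p := fun n => n ≤ m ∧ i ≤ f n) (by omega) ⟨m, le_rfl, hm⟩
  exact ⟨j, hj1.1, by omega, hj1.2⟩

theorem stmt11_general {V : Type} (A : Finset (V × V))
    (l : V × V → ℕ) (hl : ∀ e ∈ A, l e = 0 ∨ l e = 1)
    (s t : V) (d : V → ℕ) (hds : d s = 0)
    (hpot : ∀ e ∈ A, d e.2 ≤ d e.1 + l e) :
    (∀ i j : ℕ, 1 ≤ i → 1 ≤ j → i ≠ j →
      Disjoint (A.filter (fun e => d e.1 = i - 1 ∧ d e.2 = i))
        (A.filter (fun e => d e.1 = j - 1 ∧ d e.2 = j))) ∧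
    (∀ i : ℕ, 1 ≤ i →
      ∀ e ∈ A.filter (fun e => d e.1 = i - 1 ∧ d e.2 = i), l e ≠ 0) ∧
    (∀ (m : ℕ) (w : ℕ → V), w 0 = s → w m = t →
      (∀ j < m, (w j, w (j + 1)) ∈ A) →
      ∀ i : ℕ, 1 ≤ i → i ≤ d t →
        ∃ j < m, d (w j) = i - 1 ∧ d (w (j + 1)) = i ∧
          l (w j, w (j + 1)) = 1) := by
  refine ⟨?_, ?_, ?_⟩
  · intro i j _ _ hij
    exact Finset.disjoint_filter.2 fun e _ hi hj => hij (hi.2 ▸ hj.2)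
  · intro i hi e he hl0
    obtain ⟨heA, hd1, hd2⟩ := Finset.mem_filter.1 he
    have := hpot e heA
    omega
  · intro m w hw0 hwm hwalk i hi hit
    obtain ⟨j, hjm, hbelow, habove⟩ :=
      Nat.exists_lt_le_succ_of_lt_of_le (f := fun k => d (w k))
        (show d (w 0) < i by rw [hw0, hds]; omega) (show i ≤ d (w m) by rwa [hwm])
    have hstep : d (w (j + 1)) ≤ d (w j) + l (w j, w (j + 1)) := hpot _ (hwalk j hjm)
    have hlen := hl _ (hwalk j hjm)
    exact ⟨j, hjm, by omega, by omega, by omega⟩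

/-- Lemma 2 of the paper. Let `l` be `0/1` arc lengths and `d` a distance
potential from `s` (`d s = 0` and `d v ≤ d u + l (u,v)` for every arc `(u,v)`).
With `E_i = {(u,v) ∈ A : d u = i-1, d v = i}`: (a) the sets `E_i`, `i ≥ 1`, are
pairwise disjoint; (b) no arc of length `0` belongs to any `E_i`; (c) every
walk `w 0 = s, …, w m = t` crosses, for each `1 ≤ i ≤ d t`, some arc of `E_i`
of length `1` — so each `E_i` is an `s`–`t` cut-set of length-`1` arcs. -/
theorem stmt11 {V : Type} [DecidableEq V] (A : Finset (V × V))
    (l : V × V → ℕ) (hl : ∀ e ∈ A, l e = 0 ∨ l e = 1)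
    (s t : V) (d : V → ℕ) (hds : d s = 0)
    (hpot : ∀ e ∈ A, d e.2 ≤ d e.1 + l e) :
    (∀ i j : ℕ, 1 ≤ i → 1 ≤ j → i ≠ j →
      Disjoint (A.filter (fun e => d e.1 = i - 1 ∧ d e.2 = i))
        (A.filter (fun e => d e.1 = j - 1 ∧ d e.2 = j))) ∧
    (∀ i : ℕ, 1 ≤ i →
      ∀ e ∈ A.filter (fun e => d e.1 = i - 1 ∧ d e.2 = i), l e ≠ 0) ∧
    (∀ (m : ℕ) (w : ℕ → V), w 0 = s → w m = t →
      (∀ j < m, (w j, w (j + 1)) ∈ A) →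
      ∀ i : ℕ, 1 ≤ i → i ≤ d t →
        ∃ j < m, d (w j) = i - 1 ∧ d (w (j + 1)) = i ∧
          l (w j, w (j + 1)) = 1) :=
  stmt11_general A l hl s t d hds hpot
end

section
/- There exists a universal constant C > 0 such that the following holds. Let E be a finite set, E_1, …, E_p ⊆ E pairwise disjoint subsets, and U a finite set of scenarios with |U| = K ≥ 3, each scenario ξ assigning a nonnegative cost c^ξ_e to every e ∈ E. Let x : E → [0,1] satisfy Σ_{e∈E_i} x_e ≥ 1 for every i ∈ {1,…,p}, and suppose for some L > 0 that Σ_{e∈E} c^ξ_e x_e ≤ L for every ξ ∈ U and c^ξ_e ≤ L for every ξ ∈ U and every e with x_e > 0. Then there exists X ⊆ E_1 ∪ … ∪ E_p with |X ∩ E_i| = 1 for every i such that Σ_{e∈X} c^ξ_e ≤ C · L · ln K / ln ln K for every ξ ∈ U. -/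
/-!
Round the fractional solution independently in each block: pick `e ∈ E i` with probability
`x e / ∑_{E i} x`. After scaling costs by `L`, each cost on the support lies in `[0, 1]`, so
convexity of `exp` gives `𝔼 exp (t · cost) ≤ exp (exp t - 1)` in every scenario. With
`t = ln ln K` this is `≤ K`, so by Markov's inequality the scaled cost exceeds
`3 ln K / ln ln K` with probability at most `K⁻²`, and a union bound over the `K` scenarios
leaves an outcome that is good for all of them.
-/

open Finset Function Real

theorem Real.exp_mul_le_one_add_mul_exp_sub_one {t : ℝ} (ht₀ : 0 ≤ t) (ht₁ : t ≤ 1) (x : ℝ) :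
    exp (t * x) ≤ 1 + t * (exp x - 1) :=
  calc exp (t * x) = exp ((1 - t) * 0 + t * x) := by ring_nf
    _ ≤ (1 - t) * exp 0 + t * exp x :=
        convexOn_exp.2 (Set.mem_univ _) (Set.mem_univ _) (by linarith) ht₀ (by ring)
    _ = 1 + t * (exp x - 1) := by rw [exp_zero]; ring

theorem Finset.exists_forall_le_of_sum_mul_exp_le {α κ : Type*} [Fintype κ] {Ω : Finset α}
    {w : α → ℝ} (hw : ∀ f ∈ Ω, 0 ≤ w f) (hw₁ : ∑ f ∈ Ω, w f = 1) {Z : κ → α → ℝ}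
    {t M B : ℝ} (ht : 0 < t) (hB : ∀ ξ, ∑ f ∈ Ω, w f * exp (t * Z ξ f) ≤ B)
    (hMB : Fintype.card κ * B < exp (t * M)) :
    ∃ f ∈ Ω, ∀ ξ, Z ξ f ≤ M := by
  have hlt : ∑ f ∈ Ω, w f * ∑ ξ, exp (t * Z ξ f - t * M) < ∑ f ∈ Ω, w f * 1 :=
    calc ∑ f ∈ Ω, w f * ∑ ξ, exp (t * Z ξ f - t * M)
        = ∑ ξ, (∑ f ∈ Ω, w f * exp (t * Z ξ f)) / exp (t * M) := by
          simp only [exp_sub, mul_sum, sum_div, mul_div_assoc]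
          exact sum_comm
      _ ≤ ∑ _ξ : κ, B / exp (t * M) := by gcongr with ξ; exact hB ξ
      _ = Fintype.card κ * B / exp (t * M) := by
          rw [sum_const, card_univ, nsmul_eq_mul, mul_div_assoc]
      _ < ∑ f ∈ Ω, w f * 1 := by
          rw [← sum_mul, hw₁, one_mul, div_lt_one (exp_pos _)]
          exact hMB
  obtain ⟨f, hf, hwf⟩ := exists_lt_of_sum_lt hlt
  refine ⟨f, hf, fun ξ => ?_⟩
  have hexp : exp (t * Z ξ f - t * M) < 1 :=
    (single_le_sum (f := fun η => exp (t * Z η f - t * M)) (fun _ _ => (exp_pos _).le)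
      (mem_univ ξ)).trans_lt
      (lt_of_mul_lt_mul_left hwf (hw f hf))
  rw [exp_lt_one_iff, sub_neg] at hexp
  exact (lt_of_mul_lt_mul_left hexp ht.le).le

theorem Finset.sum_mul_exp_le {ι : Type*} (s : Finset ι) {q a : ι → ℝ}
    (hq : ∀ e ∈ s, 0 ≤ q e) (ha₀ : ∀ e ∈ s, 0 ≤ a e) (ha₁ : ∀ e ∈ s, 0 < q e → a e ≤ 1)
    (t : ℝ) :
    ∑ e ∈ s, q e * exp (t * a e) ≤ ∑ e ∈ s, q e + (exp t - 1) * ∑ e ∈ s, a e * q e := by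
  rw [mul_sum, ← sum_add_distrib]
  refine sum_le_sum fun e he => ?_
  rcases (hq e he).eq_or_lt with hq₀ | hq₀
  · simp [← hq₀]
  · calc q e * exp (t * a e) ≤ q e * (1 + a e * (exp t - 1)) := by
          rw [mul_comm t]
          exact mul_le_mul_of_nonneg_left
            (exp_mul_le_one_add_mul_exp_sub_one (ha₀ e he) (ha₁ e he hq₀) t) hq₀.le
      _ = q e + (exp t - 1) * (a e * q e) := by ring

section Rounding

variable {ι κ : Type*} [Fintype κ]

noncomputable def roundingProb (E : κ → Finset ι) (x : ι → ℝ) (f : κ → ι) : ℝ :=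
  ∏ i, x (f i) / ∑ e ∈ E i, x e

variable {E : κ → Finset ι} {x : ι → ℝ}

theorem roundingProb_nonneg (hx : ∀ e, 0 ≤ x e) (f : κ → ι) : 0 ≤ roundingProb E x f :=
  prod_nonneg fun _ _ => div_nonneg (hx _) (sum_nonneg fun e _ => hx e)

variable [DecidableEq κ]

theorem sum_roundingProb (hS : ∀ i, ∑ e ∈ E i, x e ≠ 0) :
    ∑ f ∈ Fintype.piFinset E, roundingProb E x f = 1 := by
  simp only [roundingProb]
  rw [← prod_univ_sum E fun i e => x e / ∑ e ∈ E i, x e]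
  exact prod_eq_one fun i _ => by rw [← sum_div, div_self (hS i)]

theorem sum_roundingProb_mul_exp_le (hE : Pairwise (Disjoint on E)) (hx : ∀ e, 0 ≤ x e)
    (hS : ∀ i, 1 ≤ ∑ e ∈ E i, x e) [Fintype ι] {a : ι → ℝ} (ha₀ : ∀ e, 0 ≤ a e)
    (ha₁ : ∀ e, 0 < x e → a e ≤ 1) (hax : ∑ e, a e * x e ≤ 1) {t : ℝ} (ht : 0 ≤ t) :
    ∑ f ∈ Fintype.piFinset E, roundingProb E x f * exp (t * ∑ i, a (f i)) ≤
      exp (exp t - 1) := by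
  classical
  set S : κ → ℝ := fun i => ∑ e ∈ E i, x e
  have hS₀ : ∀ i, 0 < S i := fun i => one_pos.trans_le (hS i)
  have het : 0 ≤ exp t - 1 := sub_nonneg.2 (one_le_exp ht)
  have hax₀ : ∀ e, 0 ≤ a e * x e := fun e => mul_nonneg (ha₀ e) (hx e)
  have hfactor : ∀ i, ∑ e ∈ E i, x e / S i * exp (t * a e) ≤
      1 + (exp t - 1) * ∑ e ∈ E i, a e * x e := by
    intro i
    have hq : ∑ e ∈ E i, x e / S i = 1 := by rw [← sum_div, div_self (hS₀ i).ne']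
    have hqa : ∑ e ∈ E i, a e * (x e / S i) ≤ ∑ e ∈ E i, a e * x e := by
      simp only [← mul_div_assoc, ← sum_div]
      exact div_le_self (sum_nonneg fun e _ => hax₀ e) (hS i)
    calc ∑ e ∈ E i, x e / S i * exp (t * a e)
        ≤ ∑ e ∈ E i, x e / S i + (exp t - 1) * ∑ e ∈ E i, a e * (x e / S i) :=
          sum_mul_exp_le _ (fun e _ => div_nonneg (hx e) (hS₀ i).le) (fun e _ => ha₀ e)
            (fun e _ he => ha₁ e (pos_of_mul_pos_left he (inv_nonneg.2 (hS₀ i).le))) t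
      _ ≤ 1 + (exp t - 1) * ∑ e ∈ E i, a e * x e := by rw [hq]; gcongr
  have hblocks : ∑ i, ∑ e ∈ E i, a e * x e ≤ 1 :=
    calc ∑ i, ∑ e ∈ E i, a e * x e = ∑ e ∈ univ.biUnion E, a e * x e :=
          (sum_biUnion (hE.set_pairwise _)).symm
      _ ≤ ∑ e, a e * x e := sum_le_univ_sum_of_nonneg hax₀
      _ ≤ 1 := hax
  calc ∑ f ∈ Fintype.piFinset E, roundingProb E x f * exp (t * ∑ i, a (f i))
      = ∏ i, ∑ e ∈ E i, x e / S i * exp (t * a e) := by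
        rw [prod_univ_sum]
        simp only [roundingProb, mul_sum, exp_sum, prod_mul_distrib, S]
    _ ≤ ∏ i, (1 + (exp t - 1) * ∑ e ∈ E i, a e * x e) :=
        prod_le_prod (fun i _ => sum_nonneg fun e _ =>
          mul_nonneg (div_nonneg (hx e) (hS₀ i).le) (exp_pos _).le) fun i _ => hfactor i
    _ ≤ exp (∑ i, (exp t - 1) * ∑ e ∈ E i, a e * x e) :=
        prod_one_add_le_exp_sum _ fun i => mul_nonneg het (sum_nonneg fun e _ => hax₀ e)
    _ ≤ exp (exp t - 1) := by
        rw [← mul_sum]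
        gcongr
        exact mul_le_of_le_one_right het hblocks

end Rounding

theorem image_inter_eq_singleton_of_pairwise_disjoint {ι κ : Type*} [DecidableEq ι] [Fintype κ]
    {E : κ → Finset ι} (hE : Pairwise (Disjoint on E)) {f : κ → ι} (hf : ∀ i, f i ∈ E i)
    (i : κ) : univ.image f ∩ E i = {f i} := by
  ext e
  simp only [mem_inter, mem_image, mem_univ, true_and, mem_singleton]
  constructor
  · rintro ⟨⟨j, rfl⟩, hj⟩
    by_contra hji
    exact disjoint_left.1 (hE fun h => hji (congrArg f h)) (hf j) hj
  · rintro rfl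
    exact ⟨⟨i, rfl⟩, hf i⟩

theorem injective_of_pairwise_disjoint {ι κ : Type*} {E : κ → Finset ι}
    (hE : Pairwise (Disjoint on E)) {f : κ → ι} (hf : ∀ i, f i ∈ E i) : Injective f :=
  fun i j hij => by_contra fun hne => disjoint_left.1 (hE hne) (hf i) (hij ▸ hf j)

/-- Lemma 3 (and Lemma 5) of the paper: given pairwise disjoint subsets
`E 0, …, E (p-1)` of the ground set, each of fractional weight at least `1`,
and a fractional solution of max scenario cost `≤ L` with support costs `≤ L`,
one can pick exactly one element from each `E i` so that the chosen set has
scenario cost at most `C·L·ln K / ln ln K` under every scenario. -/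
theorem stmt12 :
    ∃ C : ℝ, 0 < C ∧
      ∀ (ι : Type) [Fintype ι] [DecidableEq ι] (p K : ℕ)
        (E : Fin p → Finset ι) (c : Fin K → ι → ℝ) (x : ι → ℝ) (L : ℝ),
        3 ≤ K →
        (∀ i j, i ≠ j → Disjoint (E i) (E j)) →
        (∀ ξ e, 0 ≤ c ξ e) →
        (∀ e, 0 ≤ x e ∧ x e ≤ 1) →
        (∀ i, 1 ≤ ∑ e ∈ E i, x e) →
        0 < L →
        (∀ ξ, ∑ e, c ξ e * x e ≤ L) →
        (∀ ξ e, 0 < x e → c ξ e ≤ L) →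
        ∃ X : Finset ι, X ⊆ Finset.univ.biUnion E ∧
          (∀ i, (X ∩ E i).card = 1) ∧
          ∀ ξ, ∑ e ∈ X, c ξ e ≤ C * L * Real.log K / Real.log (Real.log K) := by
  refine ⟨3, by norm_num, ?_⟩
  intro ι _ _ p K E c x L hK hdisj hc hx hS hL hsum hsupp
  have hE : Pairwise (Disjoint on E) := fun i j hij => hdisj i j hij
  have hx₀ : ∀ e, 0 ≤ x e := fun e => (hx e).1
  have hK₃ : (3 : ℝ) ≤ K := by exact_mod_cast hK
  have hK₀ : (0 : ℝ) < K := by linarith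
  have hlogK : 1 < log K := by
    rw [lt_log_iff_exp_lt hK₀]
    exact exp_one_lt_d9.trans_le (by linarith)
  have ht : 0 < log (log K) := log_pos hlogK
  have hbound : Fintype.card (Fin K) * exp (exp (log (log K)) - 1) <
      exp (log (log K) * (3 * log K / log (log K))) := by
    rw [exp_log (by linarith), mul_div_cancel₀ _ ht.ne', Fintype.card_fin,
      ← exp_log hK₀, ← exp_add, log_exp]
    exact exp_lt_exp.2 (by linarith)
  obtain ⟨f, hf, hfc⟩ := exists_forall_le_of_sum_mul_exp_le
    (fun f _ => roundingProb_nonneg hx₀ f) (sum_roundingProb fun i => by linarith [hS i])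
    (Z := fun ξ f => ∑ i, c ξ (f i) / L) ht
    (fun ξ => sum_roundingProb_mul_exp_le hE hx₀ hS (fun e => div_nonneg (hc ξ e) hL.le)
      (fun e he => (div_le_one hL).2 (hsupp ξ e he))
      (by simpa only [div_mul_eq_mul_div, ← sum_div, div_le_one hL] using hsum ξ) ht.le)
    hbound
  rw [Fintype.mem_piFinset] at hf
  refine ⟨univ.image f, ?_, fun i => ?_, fun ξ => ?_⟩
  · exact image_subset_iff.2 fun i _ => mem_biUnion.2 ⟨i, mem_univ i, hf i⟩
  · rw [image_inter_eq_singleton_of_pairwise_disjoint hE hf, card_singleton]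
  · have hξ := hfc ξ
    rw [← sum_div, div_le_iff₀ hL] at hξ
    rw [sum_image fun i _ j _ h => injective_of_pairwise_disjoint hE hf h]
    linarith [show 3 * log K / log (log K) * L = 3 * L * log K / log (log K) by ring]
end

section
/- Let G = (V,E) be a finite simple graph and F ⊆ E an acyclic set of edges whose spanning subgraph (V,F) has connected components C_1, …, C_q. Let I ⊆ {1,…,q} be such that no edge of G has one endpoint in C_i and the other in C_j for distinct i, j ∈ I. For each i ∈ I let e_i ∈ E be an edge with exactly one endpoint in C_i. Then the edges e_i, i ∈ I, are pairwise distinct, the edge set F ∪ {e_i : i ∈ I} is acyclic, and the spanning subgraph (V, F ∪ {e_i : i ∈ I}) has exactly q − |I| connected components. -/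
/-!
Adding an edge between two vertices in different components of a forest keeps it a forest and
merges exactly two components into one. Add the edges `e i` one at a time: an edge `e j` added
earlier does not touch the component `i`, since it starts in the component `j` and, by
independence, does not end in `i`. Hence the endpoints of `e i` are still in different components
when `e i` is added.
-/

open SimpleGraph Finset

theorem Nat.card_add_one_of_surjective_of_injOn_compl_singleton {α β : Type*} [Finite α]
    {f : α → β} (hf : f.Surjective) {a b : α} (hab : a ≠ b) (hfab : f a = f b)
    (hinj : Set.InjOn f {b}ᶜ) : Nat.card β + 1 = Nat.card α := by
  have himage : f '' {b}ᶜ = Set.univ := Set.eq_univ_of_forall fun y => by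
    obtain ⟨x, rfl⟩ := hf y
    by_cases hx : x = b
    · exact ⟨a, hab, hx ▸ hfab⟩
    · exact ⟨x, hx, rfl⟩
  rw [← Set.ncard_univ, ← himage, hinj.ncard_image, ← Set.ncard_singleton b,
    Set.ncard_compl_add_ncard]

namespace SimpleGraph

variable {V : Type*} {G K : SimpleGraph V} {u v x y : V}

theorem Reachable.mem_of_forall_adj_mem {S : Set V} (hS : ∀ ⦃a b⦄, a ∈ S → G.Adj a b → b ∈ S)
    (h : G.Reachable x y) (hx : x ∈ S) : y ∈ S := by
  obtain ⟨w⟩ := h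
  induction w with
  | nil => exact hx
  | cons hadj _ ih => exact ih (hS hx hadj)

theorem Reachable.of_sup_edge (h : (G ⊔ edge u v).Reachable x y) :
    G.Reachable x y ∨ G.Reachable x u ∧ G.Reachable v y ∨ G.Reachable x v ∧ G.Reachable u y := by
  refine h.mem_of_forall_adj_mem (S := {y | G.Reachable x y ∨ G.Reachable x u ∧ G.Reachable v y ∨
    G.Reachable x v ∧ G.Reachable u y}) ?_ (Or.inl .rfl)
  rintro a b ha (hab | hab)
  · have := hab.reachable
    grind [Reachable.trans]
  · obtain ⟨⟨rfl, rfl⟩ | ⟨rfl, rfl⟩, -⟩ := (edge_adj ..).mp hab <;> grind [Reachable.refl]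

theorem card_connectedComponent_sup_edge_add_one [Finite V] (h : ¬G.Reachable u v) :
    Nat.card (G ⊔ edge u v).ConnectedComponent + 1 = Nat.card G.ConnectedComponent := by
  refine Nat.card_add_one_of_surjective_of_injOn_compl_singleton
    (ConnectedComponent.surjective_map_ofLE le_sup_left) (a := G.connectedComponentMk u)
    (b := G.connectedComponentMk v) (mt ConnectedComponent.exact h) ?_ ?_
  · have huv : u ≠ v := by
      rintro rfl
      exact h .rfl
    exact ConnectedComponent.sound
      (Adj.reachable (Or.inr ((edge_adj ..).mpr ⟨.inl ⟨rfl, rfl⟩, huv⟩)))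
  · intro c hc d hd hcd
    induction c using ConnectedComponent.ind with | h x
    induction d using ConnectedComponent.ind with | h y
    simp only [Set.mem_compl_singleton_iff, ne_eq, ConnectedComponent.eq] at hc hd
    simp only [ConnectedComponent.map_mk, Hom.coe_ofLE, id, ConnectedComponent.eq] at hcd ⊢
    rcases hcd.of_sup_edge with hxy | ⟨-, hvy⟩ | ⟨hxv, -⟩
    · exact hxy
    · exact (hd hvy.symm).elim
    · exact (hc hxv).elim

theorem ConnectedComponent.mem_supp_of_reachable_sup {c : G.ConnectedComponent}
    (hK : ∀ a ∈ c.supp, ∀ b, ¬K.Adj a b) (h : (G ⊔ K).Reachable x y) (hx : x ∈ c.supp) :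
    y ∈ c.supp :=
  h.mem_of_forall_adj_mem (fun a b ha hab => ((sup_adj ..).mp hab).elim
    (c.mem_supp_of_adj_mem_supp ha) fun hK' => (hK a ha b hK').elim) hx

theorem fromEdgeSet_insert_mk (s : Set (Sym2 V)) :
    fromEdgeSet (insert s(u, v) s) = fromEdgeSet s ⊔ edge u v := by
  rw [Set.insert_eq, fromEdgeSet_union, sup_comm, edge]

section Exit

variable {H : SimpleGraph V} (e : H.ConnectedComponent → V × V)

theorem not_adj_fromEdgeSet_image_of_mem_supp {S : Set H.ConnectedComponent}
    {i : H.ConnectedComponent} (hin : ∀ j ∈ S, H.connectedComponentMk (e j).1 = j)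
    (hout : ∀ j ∈ S, H.connectedComponentMk (e j).2 ≠ i) (hi : i ∉ S) (hx : x ∈ i.supp) :
    ¬(fromEdgeSet ((fun j => s((e j).1, (e j).2)) '' S)).Adj x y := by
  rintro ⟨⟨j, hj, hjxy⟩, -⟩
  rw [ConnectedComponent.mem_supp_iff] at hx
  rcases Sym2.eq_iff.mp hjxy with ⟨rfl, -⟩ | ⟨-, rfl⟩
  · exact hi (hx.symm.trans (hin j hj) ▸ hj)
  · exact hout j hj hx

theorem injOn_sym2Mk_of_exit {I : Set H.ConnectedComponent}
    (hin : ∀ i ∈ I, H.connectedComponentMk (e i).1 = i)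
    (hout : ∀ i ∈ I, H.connectedComponentMk (e i).2 ∉ I) :
    Set.InjOn (fun i => s((e i).1, (e i).2)) I := by
  intro i hi j hj hij
  rcases Sym2.eq_iff.mp hij with ⟨h1, -⟩ | ⟨h1, -⟩
  · exact (hin i hi).symm.trans (h1 ▸ hin j hj)
  · refine (hout j hj ?_).elim
    rw [← h1, hin i hi]
    exact hi

theorem IsAcyclic.sup_fromEdgeSet_image_of_exit [Finite V] (hH : H.IsAcyclic)
    (I : Finset H.ConnectedComponent) (hin : ∀ i ∈ I, H.connectedComponentMk (e i).1 = i)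
    (hout : ∀ i ∈ I, H.connectedComponentMk (e i).2 ∉ I) :
    (H ⊔ fromEdgeSet ((fun i => s((e i).1, (e i).2)) '' I)).IsAcyclic ∧
      Nat.card (H ⊔ fromEdgeSet ((fun i => s((e i).1, (e i).2)) '' I)).ConnectedComponent + #I =
        Nat.card H.ConnectedComponent := by
  classical
  induction I using Finset.induction_on with
  | empty => simpa using hH
  | insert i S hiS ih =>
    have hinS : ∀ j ∈ S, H.connectedComponentMk (e j).1 = j :=
      fun j hj => hin j (mem_insert_of_mem hj)
    have houtS : ∀ j ∈ S, H.connectedComponentMk (e j).2 ∉ S :=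
      fun j hj hjS => hout j (mem_insert_of_mem hj) (mem_insert_of_mem hjS)
    obtain ⟨hacyc, hcard⟩ := ih hinS houtS
    have hnreach : ¬(H ⊔ fromEdgeSet ((fun j => s((e j).1, (e j).2)) '' S)).Reachable
        (e i).1 (e i).2 := fun hreach => by
      have hstay : (e i).2 ∈ i.supp := ConnectedComponent.mem_supp_of_reachable_sup
        (fun x hx y => not_adj_fromEdgeSet_image_of_mem_supp e hinS
          (fun j hj hji => hout j (mem_insert_of_mem hj) (hji ▸ mem_insert_self i S)) hiS hx)
        hreach (hin i (mem_insert_self i S))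
      rw [ConnectedComponent.mem_supp_iff] at hstay
      exact hout i (mem_insert_self i S) (hstay.symm ▸ mem_insert_self i S)
    rw [coe_insert, Set.image_insert_eq, fromEdgeSet_insert_mk, ← sup_assoc,
      card_insert_of_notMem hiS]
    refine ⟨hacyc.sup_edge_of_not_reachable hnreach, ?_⟩
    rw [← hcard, ← card_connectedComponent_sup_edge_add_one hnreach, add_assoc, add_comm 1]

end Exit

end SimpleGraph

theorem stmt14_general {V : Type} [Fintype V] (G : SimpleGraph V)
    (F : Finset (Sym2 V))
    (hacyc : (fromEdgeSet (↑F : Set (Sym2 V))).IsAcyclic)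
    (I : Finset ((fromEdgeSet (↑F : Set (Sym2 V))).ConnectedComponent))
    (e : (fromEdgeSet (↑F : Set (Sym2 V))).ConnectedComponent → V × V)
    (hadj : ∀ i ∈ I, G.Adj (e i).1 (e i).2)
    (hin : ∀ i ∈ I,
      (fromEdgeSet (↑F : Set (Sym2 V))).connectedComponentMk (e i).1 = i)
    (hout : ∀ i ∈ I,
      (fromEdgeSet (↑F : Set (Sym2 V))).connectedComponentMk (e i).2 ≠ i)
    (hind : ∀ i ∈ I, ∀ j ∈ I, i ≠ j → ∀ a b : V,
      (fromEdgeSet (↑F : Set (Sym2 V))).connectedComponentMk a = i →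
      (fromEdgeSet (↑F : Set (Sym2 V))).connectedComponentMk b = j →
      ¬ G.Adj a b) :
    (∀ i ∈ I, ∀ j ∈ I, i ≠ j →
      s((e i).1, (e i).2) ≠ s((e j).1, (e j).2)) ∧
    (fromEdgeSet ((↑F : Set (Sym2 V)) ∪
      (fun i => s((e i).1, (e i).2)) '' ↑I)).IsAcyclic ∧
    Nat.card ((fromEdgeSet ((↑F : Set (Sym2 V)) ∪
        (fun i => s((e i).1, (e i).2)) '' ↑I)).ConnectedComponent) + I.card =
      Nat.card ((fromEdgeSet (↑F : Set (Sym2 V))).ConnectedComponent) := by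
  have hexit : ∀ i ∈ I, (fromEdgeSet (↑F : Set (Sym2 V))).connectedComponentMk (e i).2 ∉ I := by
    intro i hi hmem
    by_cases hself : (fromEdgeSet (↑F : Set (Sym2 V))).connectedComponentMk (e i).2 = i
    · exact hout i hi hself
    · exact hind i hi _ hmem (Ne.symm hself) _ _ (hin i hi) rfl (hadj i hi)
  rw [fromEdgeSet_union]
  exact ⟨fun i hi j hj => (injOn_sym2Mk_of_exit e hin hexit).ne hi hj,
    hacyc.sup_fromEdgeSet_image_of_exit e I hin hexit⟩

/-- Correctness of one round of the deterministic min-max spanning tree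
algorithm: if `F` is an acyclic set of edges of `G`, `I` an "independent" set
of connected components of `(V,F)` (no edge of `G` joins two distinct
components of `I`), and for each `i ∈ I` the pair `e i` is an edge of `G` with
exactly one endpoint in the component `i`, then the chosen edges are pairwise
distinct, `F` together with them is still acyclic, and the number of connected
components drops by exactly `|I|`. -/
theorem stmt14 {V : Type} [Fintype V] [DecidableEq V] (G : SimpleGraph V)
    (F : Finset (Sym2 V)) (hFG : ↑F ⊆ G.edgeSet)
    (hacyc : (fromEdgeSet (↑F : Set (Sym2 V))).IsAcyclic)
    (I : Finset ((fromEdgeSet (↑F : Set (Sym2 V))).ConnectedComponent))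
    (e : (fromEdgeSet (↑F : Set (Sym2 V))).ConnectedComponent → V × V)
    (hadj : ∀ i ∈ I, G.Adj (e i).1 (e i).2)
    (hin : ∀ i ∈ I,
      (fromEdgeSet (↑F : Set (Sym2 V))).connectedComponentMk (e i).1 = i)
    (hout : ∀ i ∈ I,
      (fromEdgeSet (↑F : Set (Sym2 V))).connectedComponentMk (e i).2 ≠ i)
    (hind : ∀ i ∈ I, ∀ j ∈ I, i ≠ j → ∀ a b : V,
      (fromEdgeSet (↑F : Set (Sym2 V))).connectedComponentMk a = i →
      (fromEdgeSet (↑F : Set (Sym2 V))).connectedComponentMk b = j →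
      ¬ G.Adj a b) :
    (∀ i ∈ I, ∀ j ∈ I, i ≠ j →
      s((e i).1, (e i).2) ≠ s((e j).1, (e j).2)) ∧
    (fromEdgeSet ((↑F : Set (Sym2 V)) ∪
      (fun i => s((e i).1, (e i).2)) '' ↑I)).IsAcyclic ∧
    Nat.card ((fromEdgeSet ((↑F : Set (Sym2 V)) ∪
        (fun i => s((e i).1, (e i).2)) '' ↑I)).ConnectedComponent) + I.card =
      Nat.card ((fromEdgeSet (↑F : Set (Sym2 V))).ConnectedComponent) :=
  stmt14_general G F hacyc I e hadj hin hout hind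
end

section
/- Let n ≥ 2 and K ≥ 1 be integers, E a finite set, and for each scenario ξ in a set U of size K let c^ξ : E → [0,1] be costs. Let x : E → [0,1] satisfy Σ_{e∈E} c^ξ_e x_e ≤ 1 for every ξ ∈ U, and let k̂ be an integer with k̂ > ln(2n²K). Let (X_e)_{e∈E} be independent Bernoulli random variables with P(X_e = 1) = 1 − (1 − x_e)^{k̂}. Then for every ξ ∈ U, P( Σ_{e∈E} c^ξ_e X_e > k̂ + (e − 1)·√(k̂ · ln(2n²K)) ) < 1/(2n²K), where e is Euler's number. -/
/-!
Raghavan's Chernoff bound. With `p e = 1 - (1 - x e) ^ k̂ ≤ k̂ * x e`, the cost `S = ∑ c e * X e`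
has mean at most `k̂`. For a `{0,1}`-valued `X` and `c ∈ [0,1]`, convexity of `exp` gives
`E[exp (t c X)] ≤ exp ((eᵗ - 1) c p)`, so by independence `E[exp (t S)] ≤ exp ((eᵗ - 1) k̂)`.
Markov's inequality at `t = √(L / k̂) < 1`, where `L = ln (2n²K)`, together with
`eᵗ < 1 + t + (e - 2) t²` for `0 < t < 1`, makes the exponent exactly `-L`.
-/

open MeasureTheory ProbabilityTheory Real

namespace Real

lemma hasSum_pow_add_two_div_factorial (t : ℝ) :
    HasSum (fun n : ℕ => t ^ (n + 2) / (Nat.factorial (n + 2) : ℝ)) (exp t - 1 - t) := by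
  have h := (hasSum_nat_add_iff' 2).mpr (exp_eq_exp_ℝ ▸ NormedSpace.expSeries_div_hasSum_exp t)
  simpa [Finset.sum_range_succ, sub_sub] using h

lemma exp_lt_one_add_add_exp_one_sub_two_mul_sq {t : ℝ} (h0 : 0 < t) (h1 : t < 1) :
    exp t < 1 + t + (exp 1 - 2) * t ^ 2 := by
  have hg : HasSum (fun n : ℕ => 1 ^ (n + 2) / (Nat.factorial (n + 2) : ℝ) * t ^ 2)
      ((exp 1 - 1 - 1) * t ^ 2) :=
    (hasSum_pow_add_two_div_factorial 1).mul_right _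
  have hlt := hasSum_lt (i := 1) (fun n => ?_) ?_ (hasSum_pow_add_two_div_factorial t) hg
  · linarith
  · rw [one_pow, div_mul_eq_mul_div, one_mul]
    exact div_le_div_of_nonneg_right (pow_le_pow_of_le_one h0.le h1.le (Nat.le_add_left 2 n))
      (Nat.cast_nonneg _)
  · norm_num [Nat.factorial]
    nlinarith [mul_pos h0 h0]

lemma exp_mul_le_one_add_mul_exp_sub_one_s17 {d : ℝ} (hd0 : 0 ≤ d) (hd1 : d ≤ 1) (t : ℝ) :
    exp (d * t) ≤ 1 + d * (exp t - 1) :=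
  calc exp (d * t) = exp (d * t + (1 - d) * 0) := by simp
    _ ≤ d * exp t + (1 - d) * exp 0 :=
      convexOn_exp.2 (Set.mem_univ _) (Set.mem_univ _) hd0 (by linarith) (by ring)
    _ = 1 + d * (exp t - 1) := by rw [exp_zero]; ring

end Real

lemma one_sub_one_sub_pow_le_mul {x : ℝ} (hx : x ≤ 2) (k : ℕ) : 1 - (1 - x) ^ k ≤ k * x := by
  have := one_add_mul_sub_le_pow (a := 1 - x) (by linarith) k
  linarith

section ZeroOne

variable {Ω : Type*} {X : Ω → ℝ}

lemma eq_indicator_of_zero_or_one (hval : ∀ ω, X ω = 0 ∨ X ω = 1) :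
    X = {ω | X ω = 1}.indicator 1 := by
  funext ω
  rcases hval ω with h | h <;> simp [h]

lemma exp_mul_const_mul_of_zero_or_one (hval : ∀ ω, X ω = 0 ∨ X ω = 1) (c t : ℝ) (ω : Ω) :
    exp (t * (c * X ω)) = 1 + (exp (t * c) - 1) * X ω := by
  rcases hval ω with h | h <;> simp [h]

variable [MeasurableSpace Ω] {μ : Measure Ω} [IsProbabilityMeasure μ]

lemma mgf_const_mul_of_zero_or_one (hX : Measurable X) (hval : ∀ ω, X ω = 0 ∨ X ω = 1)
    (c t : ℝ) :
    mgf (fun ω => c * X ω) μ t = 1 + (exp (t * c) - 1) * μ.real {ω | X ω = 1} := by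
  have hset : MeasurableSet {ω | X ω = 1} := hX (measurableSet_singleton 1)
  have hint : Integrable X μ := by
    rw [eq_indicator_of_zero_or_one hval]
    exact (integrable_const 1).indicator hset
  have hmean : ∫ ω, X ω ∂μ = μ.real {ω | X ω = 1} := by
    rw [← integral_indicator_one hset]
    exact congrArg (integral μ) (eq_indicator_of_zero_or_one hval)
  simp only [mgf, exp_mul_const_mul_of_zero_or_one hval]
  rw [integral_add (integrable_const 1) (hint.const_mul _), integral_const_mul, hmean]
  simp

lemma integrable_exp_mul_const_mul_of_zero_or_one (hX : Measurable X)
    (hval : ∀ ω, X ω = 0 ∨ X ω = 1) (c t : ℝ) :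
    Integrable (fun ω => exp (t * (c * X ω))) μ := by
  simp only [exp_mul_const_mul_of_zero_or_one hval]
  refine (integrable_const 1).add (Integrable.const_mul ?_ _)
  rw [eq_indicator_of_zero_or_one hval]
  exact (integrable_const 1).indicator (hX (measurableSet_singleton 1))

lemma mgf_const_mul_le_of_zero_or_one (hX : Measurable X) (hval : ∀ ω, X ω = 0 ∨ X ω = 1)
    {c : ℝ} (hc0 : 0 ≤ c) (hc1 : c ≤ 1) (t : ℝ) :
    mgf (fun ω => c * X ω) μ t ≤ exp ((exp t - 1) * (c * μ.real {ω | X ω = 1})) := by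
  rw [mgf_const_mul_of_zero_or_one hX hval]
  have hconv : exp (t * c) - 1 ≤ c * (exp t - 1) := by
    rw [mul_comm t c]
    linarith [exp_mul_le_one_add_mul_exp_sub_one_s17 hc0 hc1 t]
  have hp : 0 ≤ μ.real {ω | X ω = 1} := measureReal_nonneg
  calc 1 + (exp (t * c) - 1) * μ.real {ω | X ω = 1}
      ≤ 1 + (exp t - 1) * (c * μ.real {ω | X ω = 1}) := by nlinarith
    _ ≤ exp ((exp t - 1) * (c * μ.real {ω | X ω = 1})) := by
        linarith [add_one_le_exp ((exp t - 1) * (c * μ.real {ω | X ω = 1}))]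

variable {ι : Type*} [Fintype ι] {X : ι → Ω → ℝ} {c : ι → ℝ}

theorem measureReal_le_sum_mul_le_exp (hmeas : ∀ e, Measurable (X e))
    (hval : ∀ e ω, X e ω = 0 ∨ X e ω = 1) (hindep : iIndepFun X μ)
    (hc : ∀ e, 0 ≤ c e ∧ c e ≤ 1) {t : ℝ} (ht : 0 ≤ t) (a : ℝ) :
    μ.real {ω | a ≤ ∑ e, c e * X e ω} ≤
      exp (-t * a + (exp t - 1) * ∑ e, c e * μ.real {ω | X e ω = 1}) := by
  set Y : ι → Ω → ℝ := fun e ω => c e * X e ω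
  have hmeasY : ∀ e, Measurable (Y e) := fun e => (hmeas e).const_mul _
  have hindepY : iIndepFun Y μ := hindep.comp _ fun e => measurable_id.const_mul (c e)
  have hS : ∀ ω, (∑ e, Y e) ω = ∑ e, c e * X e ω := fun ω => Finset.sum_apply ω _ _
  have hchernoff := measure_ge_le_exp_mul_mgf (X := ∑ e, Y e) (μ := μ) a ht
    (hindepY.integrable_exp_mul_sum hmeasY fun e _ =>
      integrable_exp_mul_const_mul_of_zero_or_one (hmeas e) (hval e) (c e) t)
  simp only [hS] at hchernoff
  calc μ.real {ω | a ≤ ∑ e, c e * X e ω} ≤ exp (-t * a) * ∏ e, mgf (Y e) μ t := by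
        rwa [← hindepY.mgf_sum hmeasY]
    _ ≤ exp (-t * a) * ∏ e, exp ((exp t - 1) * (c e * μ.real {ω | X e ω = 1})) := by
        gcongr with e
        · exact fun e _ => mgf_nonneg
        · exact mgf_const_mul_le_of_zero_or_one (hmeas e) (hval e) (hc e).1 (hc e).2 t
    _ = exp (-t * a + (exp t - 1) * ∑ e, c e * μ.real {ω | X e ω = 1}) := by
        rw [← exp_sum, ← exp_add, Finset.mul_sum]

theorem measureReal_lt_sum_mul_lt_exp_neg (hmeas : ∀ e, Measurable (X e))
    (hval : ∀ e ω, X e ω = 0 ∨ X e ω = 1) (hindep : iIndepFun X μ)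
    (hc : ∀ e, 0 ≤ c e ∧ c e ≤ 1) {m L : ℝ} (hmean : ∑ e, c e * μ.real {ω | X e ω = 1} ≤ m)
    (hL : 0 < L) (hLm : L < m) :
    μ.real {ω | m + (exp 1 - 1) * √(m * L) < ∑ e, c e * X e ω} < exp (-L) := by
  have hm : 0 < m := hL.trans hLm
  set t := √(L / m)
  have ht0 : 0 < t := sqrt_pos.2 (div_pos hL hm)
  have ht_sq : m * t ^ 2 = L := by
    rw [sq_sqrt (div_pos hL hm).le]; field_simp
  have ht_mul : t * √(m * L) = L := by
    rw [← sqrt_mul (div_pos hL hm).le, show L / m * (m * L) = L * L by field_simp,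
      sqrt_mul_self hL.le]
  have ht1 : t < 1 := by
    by_contra! h
    nlinarith [one_le_pow₀ (n := 2) h]
  have hexp_t := exp_lt_one_add_add_exp_one_sub_two_mul_sq ht0 ht1
  set a := m + (exp 1 - 1) * √(m * L)
  calc μ.real {ω | a < ∑ e, c e * X e ω} ≤ μ.real {ω | a ≤ ∑ e, c e * X e ω} :=
        measureReal_mono fun ω (h : a < ∑ e, c e * X e ω) => h.le
    _ ≤ exp (-t * a + (exp t - 1) * ∑ e, c e * μ.real {ω | X e ω = 1}) :=
        measureReal_le_sum_mul_le_exp hmeas hval hindep hc ht0.le a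
    _ < exp (-t * a + (t + (exp 1 - 2) * t ^ 2) * m) := by
        have hexp_pos : 0 ≤ exp t - 1 := by linarith [add_one_le_exp t]
        have := mul_le_mul_of_nonneg_left hmean hexp_pos
        exact exp_lt_exp.2 (by nlinarith)
    _ = exp (-L) := by
        congr 1
        linear_combination (1 - exp 1) * ht_mul + (exp 1 - 2) * ht_sq

end ZeroOne

/-- Lemma 7 of the paper (with the fractional optimum normalized to `L* = 1`
and all costs in `[0,1]`): if each element `e` is kept independently with
probability `1 - (1 - x e)^k̂` (at least one of `k̂` flips of an `x e`-biased
coin is heads), where `k̂ > ln(2n²K)` and `Σ_e c^ξ_e x_e ≤ 1` for every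
scenario, then for each scenario the probability that the total cost of kept
elements exceeds `k̂ + (e-1)·√(k̂·ln(2n²K))` is less than `1/(2n²K)`. -/
theorem stmt17 {Ω : Type} [MeasurableSpace Ω] (μ : Measure Ω)
    [IsProbabilityMeasure μ]
    {ι : Type} [Fintype ι] (n K : ℕ) (hn : 2 ≤ n) (hK : 1 ≤ K)
    (c : Fin K → ι → ℝ) (hc : ∀ ξ e, 0 ≤ c ξ e ∧ c ξ e ≤ 1)
    (x : ι → ℝ) (hx : ∀ e, 0 ≤ x e ∧ x e ≤ 1)
    (hfrac : ∀ ξ, ∑ e, c ξ e * x e ≤ 1)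
    (khat : ℕ) (hkhat : Real.log (2 * n ^ 2 * K) < khat)
    (X : ι → Ω → ℝ) (hmeas : ∀ e, Measurable (X e))
    (hval : ∀ e ω, X e ω = 0 ∨ X e ω = 1)
    (hp : ∀ e, μ {ω | X e ω = 1} = ENNReal.ofReal (1 - (1 - x e) ^ khat))
    (hindep : ProbabilityTheory.iIndepFun X μ) :
    ∀ ξ, μ {ω | (khat : ℝ) + (Real.exp 1 - 1) *
        Real.sqrt (khat * Real.log (2 * n ^ 2 * K)) <
        ∑ e, c ξ e * X e ω} <
      ENNReal.ofReal (1 / (2 * n ^ 2 * K)) := by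
  intro ξ
  have hM : (1 : ℝ) < 2 * n ^ 2 * K := by
    have : (2 : ℝ) ≤ n := by exact_mod_cast hn
    have : (1 : ℝ) ≤ K := by exact_mod_cast hK
    nlinarith
  have hprob : ∀ e, μ.real {ω | X e ω = 1} = 1 - (1 - x e) ^ khat := fun e => by
    rw [measureReal_def, hp e, ENNReal.toReal_ofReal]
    exact sub_nonneg.2 (pow_le_one₀ (by linarith [(hx e).2]) (by linarith [(hx e).1]))
  have hmean : ∑ e, c ξ e * μ.real {ω | X e ω = 1} ≤ khat :=
    calc ∑ e, c ξ e * μ.real {ω | X e ω = 1} ≤ ∑ e, c ξ e * (khat * x e) := by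
          gcongr with e
          · exact (hc ξ e).1
          · rw [hprob e]; exact one_sub_one_sub_pow_le_mul (by linarith [(hx e).2]) khat
      _ = khat * ∑ e, c ξ e * x e := by
          rw [Finset.mul_sum]; exact Finset.sum_congr rfl fun e _ => by ring
      _ ≤ khat := mul_le_of_le_one_right (Nat.cast_nonneg _) (hfrac ξ)
  have hinv : 1 / (2 * n ^ 2 * K : ℝ) = exp (-log (2 * n ^ 2 * K)) := by
    rw [exp_neg, exp_log (by linarith), one_div]
  rw [hinv, ENNReal.lt_ofReal_iff_toReal_lt (measure_ne_top _ _)]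
  exact measureReal_lt_sum_mul_lt_exp_neg hmeas hval hindep (hc ξ) hmean (log_pos hM) hkhat
end

section
/- Let n ≥ 4 be an integer and N ≥ 40 · ln n an integer. Let Z_1, …, Z_N be {0,1}-valued random variables on a probability space such that for every k ∈ {1,…,N} and every event B in the σ-algebra generated by Z_1, …, Z_{k−1} with positive probability, the conditional probability P(Z_k = 1 | B) ≥ 1/2. Then P( Σ_{k=1}^{N} Z_k < 10 · ln n ) ≤ 1/(2n²). -/
/-!
Weight the outcome of the rounds by `W = 3 ^ (N - ∑ Z) = ∏ₖ (1 + 2 · 1[Zₖ = 0])`. Given the past,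
round `k` fails with probability at most `1/2`, so it multiplies the expected weight by at most
`1 + 2 · 1/2 = 2`, whence `E W ≤ 2 ^ N`. By Markov's inequality
`P(∑ Z < m) ≤ 2 ^ N / 3 ^ (N - m)`, and for `m = 10 ln n`, `N ≥ 40 ln n` this is at most `1/(2n²)`.
-/

open MeasureTheory Finset
open scoped ENNReal

theorem prod_one_add_two_mul_indicator_eq_ofReal_three_rpow {Ω ι : Type*} [Fintype ι]
    {Z : ι → Ω → ℝ} (hZ : ∀ k ω, Z k ω = 0 ∨ Z k ω = 1) (ω : Ω) :
    ∏ j, (1 + 2 * {ω | Z j ω = 1}ᶜ.indicator 1 ω) =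
      ENNReal.ofReal (3 ^ (Fintype.card ι - ∑ j, Z j ω)) := by
  have hfactor : ∀ j,
      1 + 2 * {ω | Z j ω = 1}ᶜ.indicator 1 ω = ENNReal.ofReal (3 ^ (1 - Z j ω)) := by
    intro j
    rcases hZ j ω with h | h <;> norm_num [h]
  have hsum : (Fintype.card ι : ℝ) - ∑ j, Z j ω = ∑ j, (1 - Z j ω) := by
    simp [sum_sub_distrib]
  rw [hsum, Real.rpow_sum_of_pos (by norm_num),
    ENNReal.ofReal_prod_of_nonneg fun j _ => by positivity]
  exact prod_congr rfl fun j _ => hfactor j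

variable {Ω : Type*} [mΩ : MeasurableSpace Ω] {μ : Measure Ω}

theorem setLIntegral_le_mul_lintegral_of_measure_inter_le {m : MeasurableSpace Ω} (hm : m ≤ mΩ)
    {f : Ω → ℝ≥0∞} (hf : Measurable[m] f) {s : Set Ω} {p : ℝ≥0∞}
    (hs : ∀ B, MeasurableSet[m] B → μ (s ∩ B) ≤ p * μ B) :
    ∫⁻ ω in s, f ω ∂μ ≤ p * ∫⁻ ω, f ω ∂μ := by
  -- On `m`, the hypothesis says `μ.restrict s ≤ p • μ`, and `f` only sees `m`.
  have htrim : (μ.restrict s).trim hm ≤ (p • μ).trim hm := by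
    refine Measure.le_iff.2 fun B hB => ?_
    rw [trim_measurableSet_eq hm hB, trim_measurableSet_eq hm hB,
      Measure.restrict_apply (hm B hB), Measure.smul_apply, smul_eq_mul, Set.inter_comm]
    exact hs B hB
  calc ∫⁻ ω in s, f ω ∂μ = ∫⁻ ω, f ω ∂(μ.restrict s).trim hm := (lintegral_trim hm hf).symm
    _ ≤ ∫⁻ ω, f ω ∂(p • μ).trim hm := lintegral_mono' htrim le_rfl
    _ = p * ∫⁻ ω, f ω ∂μ := by rw [lintegral_trim hm hf, lintegral_smul_measure, smul_eq_mul]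

theorem lintegral_prod_one_add_mul_indicator_le {ι : Type*} [LinearOrder ι]
    {F : ι → MeasurableSpace Ω} (hF : ∀ k, F k ≤ mΩ) {A : ι → Set Ω}
    (hAm : ∀ k, MeasurableSet (A k)) (hA : ∀ j k, j < k → MeasurableSet[F k] (A j))
    {p : ℝ≥0∞} (hcond : ∀ k B, MeasurableSet[F k] B → μ (A k ∩ B) ≤ p * μ B)
    (r : ℝ≥0∞) (s : Finset ι) :
    ∫⁻ ω, ∏ j ∈ s, (1 + r * (A j).indicator 1 ω) ∂μ ≤ (1 + r * p) ^ #s * μ Set.univ := by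
  induction s using Finset.induction_on_max with
  | empty => simp
  | insert a s has ih =>
    set W : Ω → ℝ≥0∞ := fun ω => ∏ j ∈ s, (1 + r * (A j).indicator 1 ω)
    have hWa : Measurable[F a] W := measurable_prod _ fun j hj =>
      ((measurable_const.indicator (hA j a (has j hj))).const_mul r).const_add 1
    have hW : Measurable W := hWa.mono (hF a) le_rfl
    have ha : a ∉ s := fun h => lt_irrefl a (has a h)
    calc ∫⁻ ω, ∏ j ∈ insert a s, (1 + r * (A j).indicator 1 ω) ∂μ
        = ∫⁻ ω, W ω + (A a).indicator (fun ω => r * W ω) ω ∂μ := by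
          congr with ω
          rw [prod_insert ha]
          by_cases h : ω ∈ A a <;> simp [h, W, add_mul]
      _ = ∫⁻ ω, W ω ∂μ + r * ∫⁻ ω in A a, W ω ∂μ := by
          rw [lintegral_add_left hW, lintegral_indicator (hAm a), lintegral_const_mul r hW]
      _ ≤ ∫⁻ ω, W ω ∂μ + r * (p * ∫⁻ ω, W ω ∂μ) := by
          gcongr
          exact setLIntegral_le_mul_lintegral_of_measure_inter_le (hF a) hWa (hcond a)
      _ = (1 + r * p) * ∫⁻ ω, W ω ∂μ := by ring
      _ ≤ (1 + r * p) * ((1 + r * p) ^ #s * μ Set.univ) := by gcongr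
      _ = (1 + r * p) ^ #(insert a s) * μ Set.univ := by
          rw [card_insert_of_notMem ha, pow_succ]
          ring

theorem measure_compl_inter_le_half [IsFiniteMeasure μ] {S B : Set Ω} (hS : MeasurableSet S)
    (h : μ B / 2 ≤ μ (S ∩ B)) : μ (Sᶜ ∩ B) ≤ 2⁻¹ * μ B := by
  have hsplit : μ (Sᶜ ∩ B) + μ (S ∩ B) = μ B := by
    rw [add_comm, Set.inter_comm S, Set.inter_comm Sᶜ]
    exact measure_inter_add_sdiff B hS
  calc μ (Sᶜ ∩ B) = μ B - μ (S ∩ B) := ENNReal.eq_sub_of_add_eq (measure_ne_top _ _) hsplit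
    _ ≤ μ B - μ B / 2 := tsub_le_tsub_left h _
    _ = 2⁻¹ * μ B := by rw [ENNReal.sub_half (measure_ne_top _ _), ENNReal.div_eq_inv_mul]

abbrev pastSigmaAlgebra {ι : Type*} [Preorder ι] (Z : ι → Ω → ℝ) (k : ι) : MeasurableSpace Ω :=
  ⨆ j : {j // j < k}, MeasurableSpace.comap (Z j) inferInstance

theorem ofReal_three_rpow_mul_measure_sum_lt_le {ι : Type*} [Fintype ι] [LinearOrder ι]
    [IsProbabilityMeasure μ] {Z : ι → Ω → ℝ} (hZmeas : ∀ k, Measurable (Z k))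
    (hZval : ∀ k ω, Z k ω = 0 ∨ Z k ω = 1)
    (hcond : ∀ k B, MeasurableSet[pastSigmaAlgebra Z k] B →
      0 < μ B → μ B / 2 ≤ μ ({ω | Z k ω = 1} ∩ B)) (m : ℝ) :
    ENNReal.ofReal (3 ^ (Fintype.card ι - m)) * μ {ω | ∑ k, Z k ω < m} ≤
      2 ^ Fintype.card ι := by
  have hone : ∀ k, MeasurableSet {ω | Z k ω = 1} := fun k => hZmeas k (measurableSet_singleton 1)
  have hF : ∀ k, pastSigmaAlgebra Z k ≤ mΩ := fun k => iSup_le fun j => (hZmeas j).comap_le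
  have hA : ∀ j k, j < k → MeasurableSet[pastSigmaAlgebra Z k] {ω | Z j ω = 1}ᶜ :=
    fun j k hjk => MeasurableSet.compl <|
      le_iSup (fun j : {j // j < k} => MeasurableSpace.comap (Z j) inferInstance) ⟨j, hjk⟩ _
        ⟨{1}, measurableSet_singleton 1, rfl⟩
  have hcond' : ∀ k B, MeasurableSet[pastSigmaAlgebra Z k] B →
      μ ({ω | Z k ω = 1}ᶜ ∩ B) ≤ 2⁻¹ * μ B := by
    intro k B hB
    rcases eq_zero_or_pos (μ B) with h0 | h0
    · rw [h0, mul_zero]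
      exact (measure_mono_null Set.inter_subset_right h0).le
    · exact measure_compl_inter_le_half (hone k) (hcond k B hB h0)
  have hmoment :=
    lintegral_prod_one_add_mul_indicator_le hF (fun k => (hone k).compl) hA hcond' 2 univ
  simp only [prod_one_add_two_mul_indicator_eq_ofReal_three_rpow hZval] at hmoment
  set W : Ω → ℝ≥0∞ := fun ω => ENNReal.ofReal (3 ^ (Fintype.card ι - ∑ j, Z j ω))
  calc ENNReal.ofReal (3 ^ (Fintype.card ι - m)) * μ {ω | ∑ k, Z k ω < m}
      ≤ ENNReal.ofReal (3 ^ (Fintype.card ι - m)) *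
          μ {ω | ENNReal.ofReal (3 ^ (Fintype.card ι - m)) ≤ W ω} := by
        refine mul_le_mul_right (measure_mono fun ω (hω : ∑ k, Z k ω < m) => ?_) _
        exact ENNReal.ofReal_le_ofReal <|
          Real.rpow_le_rpow_of_exponent_le (by norm_num) (by linarith)
    _ ≤ ∫⁻ ω, W ω ∂μ := mul_meas_ge_le_lintegral (by fun_prop) _
    _ ≤ 2 ^ Fintype.card ι := by
        simpa [ENNReal.mul_inv_cancel, one_add_one_eq_two] using hmoment

theorem two_pow_div_three_rpow_le {n N : ℕ} (hn : 4 ≤ n) (hN : 40 * Real.log n ≤ N) :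
    (2 : ℝ) ^ N / 3 ^ ((N : ℝ) - 10 * Real.log n) ≤ 1 / (2 * n ^ 2) := by
  have hL : 2 * Real.log 2 ≤ Real.log n := by
    rw [← Real.log_rpow two_pos]
    exact Real.log_le_log (by positivity) (by norm_num; exact_mod_cast hn)
  have hl2 := Real.log_two_lt_d9
  have hl3 := Real.log_three_gt_d9
  have hl2pos := Real.log_pos one_lt_two
  rw [div_le_div_iff₀ (by positivity) (by positivity), one_mul,
    ← Real.log_le_log_iff (by positivity) (by positivity), Real.log_mul (by positivity)
    (by positivity), Real.log_mul (by positivity) (by positivity), Real.log_pow, Real.log_pow,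
    Real.log_rpow three_pos]
  push_cast
  -- Using `N ≥ 40 log n`, it remains to see `log n · (30 log 3 - 40 log 2 - 2) ≥ log 2`.
  nlinarith [mul_nonneg (sub_nonneg.2 hN) (by linarith : 0 ≤ Real.log 3 - Real.log 2),
    mul_nonneg (by linarith : 0 ≤ Real.log n)
      (by linarith : 0 ≤ 30 * Real.log 3 - 40 * Real.log 2 - 3.2)]

/-- Probabilistic content of Lemma 9 of the paper: if each of `N ≥ 40·ln n`
rounds is "successful" (`Z k = 1`) with conditional probability at least `1/2`
given any positive-probability event `B` measurable with respect to the
σ-algebra generated by the previous rounds, then fewer than `10·ln n`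
successes occur with probability at most `1/(2n²)`. The conditional-probability
hypothesis is stated multiplicatively as `μ B / 2 ≤ μ ({Z k = 1} ∩ B)`. -/
theorem stmt18 {Ω : Type} [MeasurableSpace Ω] (μ : Measure Ω)
    [IsProbabilityMeasure μ]
    (n N : ℕ) (hn : 4 ≤ n) (hN : 40 * Real.log n ≤ N)
    (Z : Fin N → Ω → ℝ) (hZmeas : ∀ k, Measurable (Z k))
    (hZval : ∀ k ω, Z k ω = 0 ∨ Z k ω = 1)
    (hcond : ∀ k : Fin N, ∀ B : Set Ω,
      MeasurableSet[⨆ j : {j : Fin N // j < k},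
        MeasurableSpace.comap (Z j) inferInstance] B →
      0 < μ B → μ B / 2 ≤ μ ({ω | Z k ω = 1} ∩ B)) :
    μ {ω | ∑ k, Z k ω < 10 * Real.log n} ≤
      ENNReal.ofReal (1 / (2 * n ^ 2)) := by
  set m := 10 * Real.log n
  have hchernoff := ofReal_three_rpow_mul_measure_sum_lt_le hZmeas hZval hcond m
  rw [Fintype.card_fin] at hchernoff
  have hc : 0 < (3 : ℝ) ^ ((N : ℝ) - m) := by positivity
  calc μ {ω | ∑ k, Z k ω < m} ≤ 2 ^ N / ENNReal.ofReal (3 ^ ((N : ℝ) - m)) := by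
        rw [ENNReal.le_div_iff_mul_le (by simp [hc]) (by simp), mul_comm]
        exact hchernoff
    _ = ENNReal.ofReal (2 ^ N / 3 ^ ((N : ℝ) - m)) := by
        rw [ENNReal.ofReal_div_of_pos hc, ENNReal.ofReal_pow zero_le_two, ENNReal.ofReal_ofNat]
    _ ≤ ENNReal.ofReal (1 / (2 * n ^ 2)) :=
        ENNReal.ofReal_le_ofReal (two_pow_div_three_rpow_le hn hN)
end
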